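/- arXiv:1210.5993 — 4 statements merged into one kernel-verified Lean document; each statement's English description precedes it below -/
import Mathlib

section
/- Let T be a quiver, α₀ : p → q an arrow of T such that the vertex p is incident to no arrow of T other than α₀, and let T' be the quiver obtained from T by removing p and α₀. Let M be a representation of T over a field K with ordered basis B such that every element of B ∖ B_p precedes every element of B_p and the matrix of M_{α₀} with respect to the ordered bases B_p and B_q is the identity matrix. Let M' be the restriction of M to T', β ⊆ B with M_{α₀}(β_p) ⊆ β_q, and β' = β ∖ β_p. Then there is a bijection C_β^M ≅ C_{β'}^{M'} × K^n whose first component is the restriction map V ↦ (V_r)_{r∈T'0}, where n = Σ_{b ∈ β_p} #{b' ∈ β_q : b' < M_{α₀}(b) and b' ∉ M_{α₀}(β_p)}. -/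
open scoped Classical

noncomputable section

namespace QGr

/-- A representation of the quiver with vertex set `V0` and arrow set `A`
(source and target maps are part of the data), given in coordinates with respect to
an ordered basis `B`: the basis element `b : B` sits at the vertex `vtx b`, the space
at the vertex `p` is `{b : B // vtx b = p} → K`, and `mmap a` is the map attached to
the arrow `a`. -/
structure Rep (K : Type) [Field K] (V0 A B : Type) where
  src : A → V0
  tgt : A → V0
  vtx : B → V0
  mmap : ∀ a : A, ({b : B // vtx b = src a} → K) → ({b : B // vtx b = tgt a} → K)

namespace Rep

variable {K : Type} [Field K] {V0 A B : Type}

/-- A collection of subspaces, one at each vertex. -/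
def SubRep (R : Rep K V0 A B) : Type :=
  ∀ p : V0, Submodule K ({b : B // R.vtx b = p} → K)

/-- The collection `W` is a subrepresentation. -/
def IsSubrep (R : Rep K V0 A B) (W : R.SubRep) : Prop :=
  ∀ a : A, ∀ x ∈ W (R.src a), R.mmap a x ∈ W (R.tgt a)

/-- All structure maps are `K`-linear. -/
def Linear (R : Rep K V0 A B) : Prop := ∀ a : A, IsLinearMap K (R.mmap a)

/-- Membership in the Schubert cell attached to `β ⊆ B`: each `W p` is spanned by vectors
`v b₀ = b₀ + ∑ λ_{b',b₀} b'` (`b₀ ∈ β ∩ B_p`), the sum over `b' < b₀` with `b' ∉ β`. -/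
def InCell [LinearOrder B] (R : Rep K V0 A B) (β : Finset B) (W : R.SubRep) : Prop :=
  ∀ p : V0, ∃ v : {b : B // b ∈ β ∧ R.vtx b = p} → ({b : B // R.vtx b = p} → K),
    (∀ b0, v b0 ⟨b0.val, b0.prop.2⟩ = 1) ∧
    (∀ b0 b1, b1.val ≠ b0.val → ¬(b1.val < b0.val ∧ b1.val ∉ β) → v b0 b1 = 0) ∧
    W p = Submodule.span K (Set.range v)

/-- The Schubert cell `C_β^M`. -/
def Cell [LinearOrder B] (R : Rep K V0 A B) (β : Finset B) : Set R.SubRep :=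
  {W | R.IsSubrep W ∧
    (∀ p : V0, Module.finrank K (W p) = (β.filter fun b => R.vtx b = p).card) ∧
    R.InCell β W}

/-- The quiver Grassmannian `Gr_e(M)`. -/
def Gr (R : Rep K V0 A B) (e : V0 → ℕ) : Set R.SubRep :=
  {W | R.IsSubrep W ∧ ∀ p : V0, Module.finrank K (W p) = e p}

/-- Collections of subspaces indexed by the vertices in `S0`. -/
def SubRepOn (R : Rep K V0 A B) (S0 : Set V0) : Type :=
  ∀ p : {p : V0 // p ∈ S0}, Submodule K ({b : B // R.vtx b = ↑p} → K)

/-- Subrepresentation condition over the subquiver `(S0, S1)`. -/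
def IsSubrepOn (R : Rep K V0 A B) (S0 : Set V0) (S1 : Set A) (W : R.SubRepOn S0) : Prop :=
  ∀ a : A, a ∈ S1 → ∀ (h1 : R.src a ∈ S0) (h2 : R.tgt a ∈ S0),
    ∀ x ∈ W ⟨R.src a, h1⟩, R.mmap a x ∈ W ⟨R.tgt a, h2⟩

/-- Cell membership over the vertices in `S0`. -/
def InCellOn [LinearOrder B] (R : Rep K V0 A B) (S0 : Set V0) (β : Finset B)
    (W : R.SubRepOn S0) : Prop :=
  ∀ p : {p : V0 // p ∈ S0},
    ∃ v : {b : B // b ∈ β ∧ R.vtx b = ↑p} → ({b : B // R.vtx b = ↑p} → K),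
      (∀ b0, v b0 ⟨b0.val, b0.prop.2⟩ = 1) ∧
      (∀ b0 b1, b1.val ≠ b0.val → ¬(b1.val < b0.val ∧ b1.val ∉ β) → v b0 b1 = 0) ∧
      W p = Submodule.span K (Set.range v)

/-- The Schubert cell of the restriction of the representation to the subquiver `(S0, S1)`. -/
def CellOn [LinearOrder B] (R : Rep K V0 A B) (S0 : Set V0) (S1 : Set A) (β : Finset B) :
    Set (R.SubRepOn S0) :=
  {W | R.IsSubrepOn S0 S1 W ∧
    (∀ p : {p : V0 // p ∈ S0},
      Module.finrank K (W p) = (β.filter fun b => R.vtx b = ↑p).card) ∧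
    R.InCellOn S0 β W}

/-- The quiver Grassmannian of the restriction to the subquiver `(S0, S1)`. -/
def GrOn (R : Rep K V0 A B) (S0 : Set V0) (S1 : Set A) (e : V0 → ℕ) :
    Set (R.SubRepOn S0) :=
  {W | R.IsSubrepOn S0 S1 W ∧ ∀ p : {p : V0 // p ∈ S0}, Module.finrank K (W p) = e ↑p}

/-- Restriction of a collection of subspaces to the vertices in `S0`. -/
def resOn (R : Rep K V0 A B) (S0 : Set V0) (W : R.SubRep) : R.SubRepOn S0 :=
  fun p => W ↑p

/-- `p < q` for vertices: every basis element at `p` precedes every basis element at `q`. -/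
def vlt [LT B] (R : Rep K V0 A B) (p q : V0) : Prop :=
  ∀ b b' : B, R.vtx b = p → R.vtx b' = q → b < b'

def vle [LT B] (R : Rep K V0 A B) (p q : V0) : Prop := p = q ∨ R.vlt p q

/-- The matrix of `mmap a` with respect to the ordered bases at source and target is a
(square) identity matrix. -/
def IsIdMat [LinearOrder B] (R : Rep K V0 A B) (a : A) : Prop :=
  ∃ e : {b : B // R.vtx b = R.src a} ≃o {b : B // R.vtx b = R.tgt a},
    ∀ i, R.mmap a (Pi.single i 1) = Pi.single (e i) 1

/-- `mmap a` sends the basis vector `b0` to the basis vector `b1`. -/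
def MapsBasisTo (R : Rep K V0 A B) (a : A) (b0 b1 : B) : Prop :=
  ∃ (h0 : R.vtx b0 = R.src a) (h1 : R.vtx b1 = R.tgt a),
    R.mmap a (Pi.single ⟨b0, h0⟩ 1) = Pi.single ⟨b1, h1⟩ 1

/-- The ordered basis `B` is ordered above the subquiver `(S0, S1)`. -/
def OrderedAbove [LinearOrder B] (R : Rep K V0 A B) (S0 : Set V0) (S1 : Set A) : Prop :=
  (∀ b b' : B, R.vtx b ∈ S0 → R.vtx b' ∉ S0 → b < b') ∧
  (∀ p q : V0, p ≠ q → R.vlt p q ∨ R.vlt q p) ∧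
  (∀ (r : ℕ) (pa : Fin (r+1) → V0), pa 0 ∈ S0 → (∀ i, i ≠ 0 → pa i ∉ S0) →
    Function.Injective pa →
    (∀ i : Fin r, ∃ a : A, (R.src a = pa i.castSucc ∧ R.tgt a = pa i.succ) ∨
      (R.src a = pa i.succ ∧ R.tgt a = pa i.castSucc)) →
    ∀ i : Fin r, R.vlt (pa i.castSucc) (pa i.succ)) ∧
  (∀ a : A, a ∉ S1 → R.IsIdMat a)

end Rep

/-- The relation on the vertices of the subquiver with vertex set `T0` identifying all
vertices of `S0` with each other. -/
def treeRel {V0 : Type} (S0 T0 : Set V0) :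
    {v : V0 // v ∈ T0} → {v : V0 // v ∈ T0} → Prop :=
  fun x y => (↑x ∈ S0 ∧ ↑y ∈ S0)

/-- The subquiver `(T0, T1)` is a tree extension of the subquiver `(S0, S1)`:
the quotient quiver `T/S` (arrows of `T` not in `S`; vertices of `T` with all vertices of `S`
identified) is a tree, i.e. it is connected (as an undirected graph) and the number of its
edges is one less than the number of its vertices. -/
def IsTreeExtensionIn {V0 A : Type} (src tgt : A → V0) (T0 : Set V0) (T1 : Set A)
    (S0 : Set V0) (S1 : Set A) : Prop :=
  (∀ u v : Quot (treeRel S0 T0), Relation.ReflTransGen (fun u v =>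
      ∃ a : A, a ∈ T1 ∧ a ∉ S1 ∧ ∃ (hs : src a ∈ T0) (ht : tgt a ∈ T0),
        (Quot.mk (treeRel S0 T0) ⟨src a, hs⟩ = u ∧ Quot.mk (treeRel S0 T0) ⟨tgt a, ht⟩ = v) ∨
        (Quot.mk (treeRel S0 T0) ⟨src a, hs⟩ = v ∧ Quot.mk (treeRel S0 T0) ⟨tgt a, ht⟩ = u))
      u v) ∧
  Nat.card {a : A // a ∈ T1 ∧ a ∉ S1} + 1 = Nat.card (Quot (treeRel S0 T0))

/-- `T` (the full ambient quiver) is a tree extension of the subquiver `(S0, S1)`. -/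
def IsTreeExtension {V0 A : Type} (src tgt : A → V0) (S0 : Set V0) (S1 : Set A) : Prop :=
  IsTreeExtensionIn src tgt Set.univ Set.univ S0 S1

namespace Rep

variable {K : Type} [Field K] {V0 A B QV QA : Type}

/-- The structure map of the push-forward representation `F_*M` attached to the arrow `aq`
of the target quiver. -/
def pushMap [Fintype A] (R : Rep K V0 A B) (qsrc qtgt : QA → QV) (Fv : V0 → QV)
    (Fa : A → QA) (hFs : ∀ a : A, Fv (R.src a) = qsrc (Fa a)) (aq : QA)
    (x : {b : B // Fv (R.vtx b) = qsrc aq} → K) (c : {b : B // Fv (R.vtx b) = qtgt aq}) : K :=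
  ∑ α : A, if hα : Fa α = aq then
    (if hc : R.vtx c.val = R.tgt α then
      R.mmap α (fun b => x ⟨b.val, by rw [b.prop, hFs α, hα]⟩) ⟨c.val, hc⟩
    else 0) else 0

/-- The push-forward representation `F_*M` along the quiver morphism `F = (Fv, Fa)`. -/
def push [Fintype A] (R : Rep K V0 A B) (qsrc qtgt : QA → QV) (Fv : V0 → QV)
    (Fa : A → QA) (hFs : ∀ a : A, Fv (R.src a) = qsrc (Fa a)) : Rep K QV QA B where
  src := qsrc
  tgt := qtgt
  vtx := fun b => Fv (R.vtx b)
  mmap := R.pushMap qsrc qtgt Fv Fa hFs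

/-- The push-forward `F_*V` of a collection of subspaces: at the vertex `q` of `Q` it consists
of all vectors whose component in each `M_p` with `Fv p = q` lies in `V_p`. -/
def pushSub (R : Rep K V0 A B) (Fv : V0 → QV) (W : R.SubRep) :
    ∀ q : QV, Submodule K ({b : B // Fv (R.vtx b) = q} → K) := fun q =>
  { carrier := {x | ∀ (p : V0) (hq : Fv p = q),
      (fun b : {b : B // R.vtx b = p} =>
        x ⟨b.val, by rw [b.prop]; exact hq⟩) ∈ W p}
    add_mem' := fun hx hy p hq => (W p).add_mem (hx p hq) (hy p hq)
    zero_mem' := fun p hq => (W p).zero_mem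
    smul_mem' := fun c x hx p hq => (W p).smul_mem c (hx p hq) }

/-- `reach n p` : there is an (undirected) walk of length `n` from `p` into `S0`. -/
def reach (R : Rep K V0 A B) (S0 : Set V0) : ℕ → V0 → Prop
  | 0, p => p ∈ S0
  | (n+1), p => ∃ a : A, (R.src a = p ∧ R.reach S0 n (R.tgt a)) ∨
      (R.tgt a = p ∧ R.reach S0 n (R.src a))

/-- The graph distance from `p` to the vertex set `S0`. -/
def distS (R : Rep K V0 A B) (S0 : Set V0) (p : V0) : ℕ :=
  sInf {n : ℕ | R.reach S0 n p}

/-- The fibre length `ε(p,p')` of a pair of vertices. -/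
def eps [LT B] (R : Rep K V0 A B) (Fv : V0 → QV) (p p' : V0) : ℕ :=
  Set.ncard {p'' : V0 | Fv p'' = Fv p ∧ R.vle p p'' ∧ R.vlt p'' p'}

/-- Lexicographic comparison `Ψ(p,p') < Ψ(q,q')`. -/
def psiLt [LT B] (R : Rep K V0 A B) (S0 : Set V0) (Fv : V0 → QV) (p p' q q' : V0) : Prop :=
  R.eps Fv p p' < R.eps Fv q q' ∨ (R.eps Fv p p' = R.eps Fv q q' ∧
    (max (R.distS S0 p) (R.distS S0 p') < max (R.distS S0 q) (R.distS S0 q') ∨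
     (max (R.distS S0 p) (R.distS S0 p') = max (R.distS S0 q) (R.distS S0 q') ∧
       R.vlt p' q')))

def type0 [LT B] (R : Rep K V0 A B) (Fa : A → QA) (aq : QA) (t s : V0) : Prop :=
  ¬ ∃ α : A, Fa α = aq ∧ R.vle (R.src α) s ∧ R.vle t (R.tgt α)

def type1 (R : Rep K V0 A B) (Fa : A → QA) (aq : QA) (t s : V0) : Prop :=
  ∃ α : A, Fa α = aq ∧ R.src α = s ∧ R.tgt α = t

def type2a [LT B] (R : Rep K V0 A B) (S0 : Set V0) (Fv : V0 → QV) (Fa : A → QA)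
    (aq : QA) (t s : V0) : Prop :=
  ∃ α' α'' : A, Fa α' = aq ∧ Fa α'' = aq ∧ R.tgt α' = t ∧ R.vlt (R.src α') s ∧
    R.src α'' = s ∧ R.vlt (R.tgt α'') t ∧ R.psiLt S0 Fv t (R.tgt α'') (R.src α') s

def type2b [LT B] (R : Rep K V0 A B) (S0 : Set V0) (Fv : V0 → QV) (Fa : A → QA)
    (aq : QA) (t s : V0) : Prop :=
  ∃ α' α'' : A, Fa α' = aq ∧ Fa α'' = aq ∧ R.tgt α' = t ∧ R.vlt (R.src α') s ∧
    R.src α'' = s ∧ R.vlt (R.tgt α'') t ∧ R.psiLt S0 Fv (R.src α') s t (R.tgt α'')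

def type3a [LT B] (R : Rep K V0 A B) (S0 : Set V0) (Fv : V0 → QV) (Fa : A → QA)
    (aq : QA) (t s : V0) : Prop :=
  ∃ α'' : A, Fa α'' = aq ∧ R.src α'' = s ∧ R.vlt t (R.tgt α'') ∧
    (¬ ∃ α : A, Fa α = aq ∧ R.tgt α = t) ∧
    ∀ α : A, Fa α = aq → R.vlt t (R.tgt α) → R.vlt (R.tgt α) (R.tgt α'') →
      R.psiLt S0 Fv (R.src α) s t (R.tgt α'')

def type4a [LT B] (R : Rep K V0 A B) (S0 : Set V0) (Fv : V0 → QV) (Fa : A → QA)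
    (aq : QA) (t s : V0) : Prop :=
  ∃ α' : A, Fa α' = aq ∧ R.tgt α' = t ∧ R.vlt (R.src α') s ∧
    (¬ ∃ α : A, Fa α = aq ∧ R.src α = s) ∧
    ∀ α : A, Fa α = aq → R.vlt (R.src α') (R.src α) → R.vlt (R.src α) s →
      R.psiLt S0 Fv t (R.tgt α) (R.src α') s

/-- `F` is strictly ordered with respect to the ordered basis. -/
def StrictlyOrdered [LT B] (R : Rep K V0 A B) (Fa : A → QA) : Prop :=
  ∀ α α' : A, α ≠ α' → Fa α = Fa α' →
    (R.vlt (R.src α) (R.src α') ∧ R.vlt (R.tgt α) (R.tgt α')) ∨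
    (R.vlt (R.src α') (R.src α) ∧ R.vlt (R.tgt α') (R.tgt α))

/-- The pair `(p, p')` is a relevant pair. -/
def relPair [LT B] (R : Rep K V0 A B) (S0 : Set V0) (Fv : V0 → QV) (p p' : V0) : Prop :=
  Fv p = Fv p' ∧ R.vle p p' ∧ p' ∉ S0

/-- Condition of Hypothesis (H) on outgoing arrows at the relevant pair `(p, p')`. -/
def outOK [LT B] (R : Rep K V0 A B) (S0 : Set V0) (Fv : V0 → QV) (Fa : A → QA)
    (qsrc qtgt : QA → QV) (p p' : V0) (aq : QA) : Prop :=
  qsrc aq = Fv p →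
    ((¬ ∃ α : A, Fa α = aq ∧ R.src α = p') →
      ∀ q : V0, Fv q = qtgt aq → R.type0 Fa aq q p') ∧
    ((∃ α : A, Fa α = aq ∧ R.src α = p') →
      ∃ α : A, Fa α = aq ∧ R.src α = p ∧
        (R.type1 Fa aq (R.tgt α) p' ∨ R.type2b S0 Fv Fa aq (R.tgt α) p'))

/-- Condition of Hypothesis (H) on incoming arrows at the relevant pair `(p, p')`. -/
def inOK [LT B] (R : Rep K V0 A B) (S0 : Set V0) (Fv : V0 → QV) (Fa : A → QA)
    (qsrc qtgt : QA → QV) (p p' : V0) (aq : QA) : Prop :=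
  qtgt aq = Fv p →
    ((¬ ∃ α : A, Fa α = aq ∧ R.tgt α = p) →
      ∀ q' : V0, Fv q' = qsrc aq → R.type0 Fa aq p q') ∧
    ((∃ α : A, Fa α = aq ∧ R.tgt α = p) →
      ∃ α : A, Fa α = aq ∧ R.tgt α = p' ∧
        (R.type1 Fa aq p (R.src α) ∨ R.type2a S0 Fv Fa aq p (R.src α)))

/-- Exceptional situation (1) of Hypothesis (H). -/
def exc1 [LinearOrder B] (R : Rep K V0 A B) (S0 : Set V0) (S1 : Set A) (Fv : V0 → QV)
    (Fa : A → QA) (qsrc : QA → QV) (p p' : V0) (aq : QA) : Prop :=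
  qsrc aq = Fv p ∧ ∃ α : A, Fa α = aq ∧ R.src α = p ∧
    (R.type2a S0 Fv Fa aq (R.tgt α) p' ∨ R.type4a S0 Fv Fa aq (R.tgt α) p') ∧
    (α ∈ S1 → R.IsIdMat α)

/-- Exceptional situation (2) of Hypothesis (H). -/
def exc2 [LT B] (R : Rep K V0 A B) (S0 : Set V0) (Fv : V0 → QV) (Fa : A → QA)
    (qtgt : QA → QV) (p p' : V0) (aq : QA) : Prop :=
  qtgt aq = Fv p ∧ ∃ α : A, Fa α = aq ∧ R.tgt α = p' ∧
    (R.type2b S0 Fv Fa aq p (R.src α) ∨ R.type3a S0 Fv Fa aq p (R.src α))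

/-- Hypothesis (H). -/
def HypH [LinearOrder B] (R : Rep K V0 A B) (S0 : Set V0) (S1 : Set A)
    (qsrc qtgt : QA → QV) (Fv : V0 → QV) (Fa : A → QA) : Prop :=
  R.StrictlyOrdered Fa ∧
  ∀ p p' : V0, R.relPair S0 Fv p p' →
    ((∀ aq : QA, R.outOK S0 Fv Fa qsrc qtgt p p' aq ∧ R.inOK S0 Fv Fa qsrc qtgt p p' aq) ∨
     (∃ aq0 : QA,
        (R.exc1 S0 S1 Fv Fa qsrc p p' aq0 ∨ R.exc2 S0 Fv Fa qtgt p p' aq0) ∧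
        ∀ aq : QA, aq ≠ aq0 →
          R.outOK S0 Fv Fa qsrc qtgt p p' aq ∧ R.inOK S0 Fv Fa qsrc qtgt p p' aq))


end Rep

end QGr


/-!
Since `p` is a leaf carrying only `α₀`, an element `W` of `C_β^M` amounts to its restriction `W'`
to `T'` together with the subspace `W_p`, subject only to `M_{α₀}(W_p) ⊆ W'_q`, and `M_{α₀}` just
relabels coordinates along the order isomorphism `e : B_p ≃o B_q`. Describe `W_p` and `W'_q` by
their unique echelon bases `v_b` (`b ∈ β_p`) and `w_c` (`c ∈ β_q`). Then `e_* v_b ∈ W'_q` iff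
`e_* v_b = ∑_c v_b(e⁻¹ c) w_c`. In this expansion the coefficient at `c = e b` is `1`, those at
`c ∈ e(β_p) ∖ {e b}` and at `c > e b` vanish by the echelon shape of `v_b`, and those at `c < e b`
with `c ∉ e(β_p)` are free. Conversely, for any choice `μ` of the free coefficients the pull-back
along `e` of the corresponding combination of the `w_c` is echelon of type `β_p`, because `w` is
echelon and `e(β_p) ⊆ β_q`. So `W ↦ (W', μ)` is the required bijection.
-/

open Submodule Set

lemma IsLinearMap.eq_comp_symm_of_map_single {K P Q : Type} [Field K] [Fintype P]
    [DecidableEq P] [DecidableEq Q] {f : (P → K) → (Q → K)} (hf : IsLinearMap K f) (e : P ≃ Q)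
    (he : ∀ i, f (Pi.single i 1) = Pi.single (e i) 1) (x : P → K) : f x = x ∘ e.symm := by
  have hfun : IsLinearMap.mk' f hf = LinearMap.funLeft K K e.symm := by
    refine (Pi.basisFun K P).ext fun i => ?_
    funext y
    simp [he, Pi.single_apply, Equiv.symm_apply_eq]
  exact LinearMap.congr_fun hfun x

namespace QGr

section Echelon

variable {K P : Type} [Field K] [LinearOrder P]

def IsEchelon (S : Set P) (v : S → P → K) : Prop :=
  (∀ j : S, v j j = 1) ∧ ∀ (j : S) (x : P), x ≠ j → (x < j → x ∈ S) → v j x = 0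

namespace IsEchelon

variable {S : Set P} {v : S → P → K}

lemma apply_pivot (hv : IsEchelon S v) (j k : S) : v j k = if j = k then 1 else 0 := by
  split_ifs with h
  · exact h ▸ hv.1 j
  · exact hv.2 j k (fun hk => h (Subtype.ext hk.symm)) fun _ => k.2

variable [Fintype P]

lemma sum_smul_apply (hv : IsEchelon S v) (c : S → K) (k : S) :
    (∑ j, c j • v j) k = c k := by
  simp [Finset.sum_apply, hv.apply_pivot]

lemma linearIndependent (hv : IsEchelon S v) : LinearIndependent K v :=
  Fintype.linearIndependent_iff.mpr fun c hc k => by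
    rw [← hv.sum_smul_apply c k, hc, Pi.zero_apply]

lemma sum_smul_eq_of_mem_span (hv : IsEchelon S v) {u : P → K} (hu : u ∈ span K (range v)) :
    ∑ j : S, u j • v j = u := by
  obtain ⟨c, rfl⟩ := (mem_span_range_iff_exists_fun K).mp hu
  simp only [hv.sum_smul_apply]

lemma eq_of_span_eq {v' : S → P → K} (hv : IsEchelon S v) (hv' : IsEchelon S v')
    (h : span K (range v) = span K (range v')) : v = v' := by
  funext j
  have hj : v j ∈ span K (range v') := h ▸ subset_span ⟨j, rfl⟩
  rw [← hv'.sum_smul_eq_of_mem_span hj, Finset.sum_eq_single j (fun k _ hk => ?_) (by simp),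
    hv.1, one_smul]
  rw [hv.apply_pivot, if_neg (Ne.symm hk), zero_smul]

end IsEchelon

def IsEchelonSpan (S : Set P) (U : Submodule K (P → K)) : Prop :=
  ∃ v : S → P → K, IsEchelon S v ∧ U = span K (range v)

namespace IsEchelonSpan

variable {S : Set P} {U : Submodule K (P → K)}

def basis (h : IsEchelonSpan S U) : S → P → K := h.choose

lemma isEchelon_basis (h : IsEchelonSpan S U) : IsEchelon S h.basis := h.choose_spec.1

lemma eq_span_basis (h : IsEchelonSpan S U) : U = span K (range h.basis) := h.choose_spec.2

lemma basis_mem (h : IsEchelonSpan S U) (j : S) : h.basis j ∈ U :=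
  (SetLike.ext_iff.mp h.eq_span_basis _).mpr (subset_span ⟨j, rfl⟩)

variable [Fintype P]

lemma basis_eq (h : IsEchelonSpan S U) {v : S → P → K} (hv : IsEchelon S v)
    (hU : U = span K (range v)) : h.basis = v :=
  h.isEchelon_basis.eq_of_span_eq hv (h.eq_span_basis.symm.trans hU)

lemma finrank_eq (h : IsEchelonSpan S U) : Module.finrank K U = Fintype.card S := by
  rw [h.eq_span_basis]
  exact finrank_span_eq_card h.isEchelon_basis.linearIndependent

end IsEchelonSpan

end Echelon

section Lift

variable {K P Q : Type} [Field K] [LinearOrder P] [LinearOrder Q]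
  (e : P ≃o Q) (SP : Set P) (SQ : Set Q)

abbrev FreeCoord : Type := {jc : SP × SQ // (jc.2 : Q) < e jc.1 ∧ e.symm jc.2 ∉ SP}

def freeCoords (v : SP → P → K) (jc : FreeCoord e SP SQ) : K := v jc.1.1 (e.symm jc.1.2)

def liftCoeff (μ : FreeCoord e SP SQ → K) (j : SP) (c : SQ) : K :=
  if (c : Q) = e j then 1 else if h : (c : Q) < e j ∧ e.symm c ∉ SP then μ ⟨(j, c), h⟩ else 0

variable {e SP SQ} {μ : FreeCoord e SP SQ → K}

lemma le_of_liftCoeff_ne_zero {j : SP} {c : SQ} (h : liftCoeff e SP SQ μ j c ≠ 0) :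
    (c : Q) ≤ e j := by
  unfold liftCoeff at h
  split_ifs at h with h1 h2
  · exact h1.le
  · exact h2.1.le
  · exact absurd rfl h

lemma liftCoeff_freeCoords {v : SP → P → K} (hv : IsEchelon SP v) (j : SP) (c : SQ) :
    liftCoeff e SP SQ (freeCoords e SP SQ v) j c = v j (e.symm c) := by
  unfold liftCoeff
  split_ifs with h1 h2
  · rw [h1, OrderIso.symm_apply_apply, hv.1]
  · rfl
  · refine (hv.2 j _ (fun h => h1 ?_) fun hlt => ?_).symm
    · rw [← h, OrderIso.apply_symm_apply]
    · by_contra hn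
      exact h2 ⟨e.symm_apply_lt.mp hlt, hn⟩

variable (e SP SQ) [Fintype Q]

def liftFamily (w : SQ → Q → K) (μ : FreeCoord e SP SQ → K) (j : SP) : P → K :=
  (∑ c, liftCoeff e SP SQ μ j c • w c) ∘ e

variable {e SP SQ} {w : SQ → Q → K}

lemma liftFamily_comp_symm (j : SP) :
    liftFamily e SP SQ w μ j ∘ e.symm = ∑ c, liftCoeff e SP SQ μ j c • w c := by
  funext y
  simp [liftFamily]

lemma liftFamily_symm_apply (hw : IsEchelon SQ w) (j : SP) (c : SQ) :
    liftFamily e SP SQ w μ j (e.symm c) = liftCoeff e SP SQ μ j c := by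
  rw [← Function.comp_apply (f := liftFamily e SP SQ w μ j), liftFamily_comp_symm,
    hw.sum_smul_apply]

lemma isEchelon_liftFamily (hw : IsEchelon SQ w) (hmaps : MapsTo e SP SQ) :
    IsEchelon SP (liftFamily e SP SQ w μ) := by
  have at_pivot : ∀ (j : SP) {x : P} (hx : x ∈ SP),
      liftFamily e SP SQ w μ j x = liftCoeff e SP SQ μ j ⟨e x, hmaps hx⟩ := fun j x hx => by
    simpa using liftFamily_symm_apply (μ := μ) hw j ⟨e x, hmaps hx⟩
  refine ⟨fun j => by rw [at_pivot j j.2, liftCoeff, if_pos rfl], fun j x hxj hx => ?_⟩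
  by_cases hxS : x ∈ SP
  · rw [at_pivot j hxS, liftCoeff, if_neg (e.injective.ne hxj), dif_neg (by simp [hxS])]
  · have hjx : e j < e x :=
      e.lt_iff_lt.mpr (lt_of_le_of_ne (not_lt.mp (mt hx hxS)) (Ne.symm hxj))
    simp only [liftFamily, Function.comp_apply, Finset.sum_apply, Pi.smul_apply, smul_eq_mul]
    refine Finset.sum_eq_zero fun c _ => ?_
    by_cases hc : liftCoeff e SP SQ μ j c = 0
    · rw [hc, zero_mul]
    · have hcx : (c : Q) < e x := (le_of_liftCoeff_ne_zero hc).trans_lt hjx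
      rw [hw.2 c (e x) hcx.ne' (fun h => absurd h (not_lt.mpr hcx.le)), mul_zero]

lemma freeCoords_liftFamily (hw : IsEchelon SQ w) :
    freeCoords e SP SQ (liftFamily e SP SQ w μ) = μ := by
  funext jc
  rw [freeCoords, liftFamily_symm_apply hw, liftCoeff, if_neg jc.2.1.ne, dif_pos jc.2]

lemma liftFamily_freeCoords {v : SP → P → K} (hw : IsEchelon SQ w) (hv : IsEchelon SP v)
    (hvw : ∀ j, v j ∘ e.symm ∈ span K (range w)) :
    liftFamily e SP SQ w (freeCoords e SP SQ v) = v := by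
  funext j x
  have hsum := congrFun (hw.sum_smul_eq_of_mem_span (hvw j)) (e x)
  simp only [Function.comp_apply, OrderIso.symm_apply_apply] at hsum
  simp only [liftFamily, liftCoeff_freeCoords hv, Function.comp_apply, hsum]

lemma comp_symm_mem_of_mem_span_liftFamily {x : P → K}
    (hx : x ∈ span K (range (liftFamily e SP SQ w μ))) : x ∘ e.symm ∈ span K (range w) := by
  have hle : span K (range (liftFamily e SP SQ w μ)) ≤
      (span K (range w)).comap (LinearMap.funLeft K K e.symm) := by
    refine span_le.mpr ?_
    rintro _ ⟨j, rfl⟩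
    change liftFamily e SP SQ w μ j ∘ e.symm ∈ span K (range w)
    rw [liftFamily_comp_symm]
    exact sum_mem fun c _ => smul_mem _ _ (subset_span ⟨c, rfl⟩)
  exact hle hx

lemma span_liftFamily_freeCoords_basis {U : Submodule K (P → K)} (hw : IsEchelon SQ w)
    (h : IsEchelonSpan SP U) (hU : ∀ x ∈ U, x ∘ e.symm ∈ span K (range w)) :
    span K (range (liftFamily e SP SQ w (freeCoords e SP SQ h.basis))) = U := by
  rw [liftFamily_freeCoords hw h.isEchelon_basis
      fun j => hU _ (h.basis_mem j), ← h.eq_span_basis]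

variable [Fintype P]

lemma freeCoords_basis_of_eq_span {U : Submodule K (P → K)} (hw : IsEchelon SQ w)
    (hmaps : MapsTo e SP SQ) (h : IsEchelonSpan SP U)
    (hU : U = span K (range (liftFamily e SP SQ w μ))) :
    freeCoords e SP SQ h.basis = μ := by
  rw [h.basis_eq (isEchelon_liftFamily hw hmaps) hU, freeCoords_liftFamily hw]

end Lift

namespace Rep

variable {K V0 A B : Type} [Field K] (R : Rep K V0 A B)

def pivots (r : V0) (γ : Finset B) : Set {b : B // R.vtx b = r} := {x | x.val ∈ γ}

variable {R}

lemma pivots_filter_ne {p r : V0} (hr : r ≠ p) (β : Finset B) :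
    R.pivots r (β.filter fun b => R.vtx b ≠ p) = R.pivots r β := by
  ext x
  simp [pivots, x.2, hr]

lemma card_pivots [Fintype B] (r : V0) (γ : Finset B) :
    Fintype.card (R.pivots r γ) = (γ.filter fun b => R.vtx b = r).card := by
  rw [← Fintype.card_coe]
  exact Fintype.card_congr
    { toFun := fun x => ⟨x.1.1, Finset.mem_filter.mpr ⟨x.2, x.1.2⟩⟩
      invFun := fun b => ⟨⟨b.1, (Finset.mem_filter.mp b.2).2⟩, (Finset.mem_filter.mp b.2).1⟩
      left_inv := fun _ => rfl
      right_inv := fun _ => rfl }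

def glue (R : Rep K V0 A B) (p : V0) (W' : R.SubRepOn {r | r ≠ p})
    (V : Submodule K ({b : B // R.vtx b = p} → K)) : R.SubRep :=
  fun r => if h : r = p then h ▸ V else W' ⟨r, h⟩

section Glue

variable {p : V0} {W' : R.SubRepOn {r | r ≠ p}} {V : Submodule K ({b : B // R.vtx b = p} → K)}

lemma glue_self : R.glue p W' V p = V := dif_pos rfl

lemma glue_of_ne {r : V0} (h : r ≠ p) : R.glue p W' V r = W' ⟨r, h⟩ := dif_neg h

lemma resOn_glue : R.resOn {r | r ≠ p} (R.glue p W' V) = W' := funext fun r => glue_of_ne r.2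

lemma glue_resOn_self (W : R.SubRep) : R.glue p (R.resOn {r | r ≠ p} W) (W p) = W := by
  funext r
  by_cases h : r = p
  · subst h
    exact glue_self
  · exact glue_of_ne h

end Glue

variable [LinearOrder B]

lemma exists_cellFamily_iff {r : V0} {γ : Finset B}
    {U : Submodule K ({b : B // R.vtx b = r} → K)} :
    (∃ v : {b : B // b ∈ γ ∧ R.vtx b = r} → ({b : B // R.vtx b = r} → K),
      (∀ b0, v b0 ⟨b0.val, b0.prop.2⟩ = 1) ∧
      (∀ b0 b1, b1.val ≠ b0.val → ¬(b1.val < b0.val ∧ b1.val ∉ γ) → v b0 b1 = 0) ∧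
      U = span K (range v)) ↔ IsEchelonSpan (R.pivots r γ) U := by
  let σ : {b : B // b ∈ γ ∧ R.vtx b = r} ≃ R.pivots r γ :=
    { toFun := fun b => ⟨⟨b.1, b.2.2⟩, b.2.1⟩
      invFun := fun x => ⟨x.1.1, x.2, x.1.2⟩
      left_inv := fun _ => rfl
      right_inv := fun _ => rfl }
  constructor
  · rintro ⟨v, h1, h0, rfl⟩
    refine ⟨v ∘ σ.symm, ⟨fun j => h1 _, fun j x hxj hx => ?_⟩, by rw [EquivLike.range_comp]⟩
    exact h0 _ _ (fun h => hxj (Subtype.ext h)) fun ⟨hlt, hn⟩ => hn (hx hlt)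
  · rintro ⟨v, ⟨h1, h0⟩, rfl⟩
    refine ⟨v ∘ σ, fun b => h1 _, fun b0 b1 hne hb => ?_, by rw [EquivLike.range_comp]⟩
    exact h0 _ _ (fun h => hne (congrArg Subtype.val h)) fun hlt => by_contra fun hn => hb ⟨hlt, hn⟩

lemma inCell_iff {β : Finset B} {W : R.SubRep} :
    R.InCell β W ↔ ∀ r, IsEchelonSpan (R.pivots r β) (W r) :=
  forall_congr' fun _ => exists_cellFamily_iff

lemma inCellOn_iff {S0 : Set V0} {β : Finset B} {W : R.SubRepOn S0} :
    R.InCellOn S0 β W ↔ ∀ r : S0, IsEchelonSpan (R.pivots r β) (W r) :=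
  forall_congr' fun _ => exists_cellFamily_iff

lemma finrank_eq_card_filter [Fintype B] {r : V0} {γ : Finset B}
    {U : Submodule K ({b : B // R.vtx b = r} → K)} (h : IsEchelonSpan (R.pivots r γ) U) :
    Module.finrank K U = (γ.filter fun b => R.vtx b = r).card :=
  h.finrank_eq.trans (card_pivots r γ)

lemma resOn_mem_cellOn [Fintype B] {β : Finset B} {W : R.SubRep} (p : V0) (S1 : Set A)
    (hW : W ∈ R.Cell β) :
    R.resOn {r | r ≠ p} W ∈ R.CellOn {r | r ≠ p} S1 (β.filter fun b => R.vtx b ≠ p) := by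
  have hech : ∀ r : {r // r ≠ p},
      IsEchelonSpan (R.pivots r (β.filter fun b => R.vtx b ≠ p)) (W r) := fun r => by
    rw [pivots_filter_ne r.2]
    exact inCell_iff.mp hW.2.2 r
  exact ⟨fun a _ _ _ x hx => hW.1 a x hx, fun r => finrank_eq_card_filter (hech r),
    inCellOn_iff.mpr hech⟩

section RemoveSource

variable {α0 : A} {β : Finset B}

lemma isEchelonSpan_tgt {S1 : Set A} {W' : R.SubRepOn {r | r ≠ R.src α0}}
    (hloop : R.src α0 ≠ R.tgt α0)
    (hW' : W' ∈ R.CellOn {r | r ≠ R.src α0} S1 (β.filter fun b => R.vtx b ≠ R.src α0)) :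
    IsEchelonSpan (R.pivots (R.tgt α0) β) (W' ⟨R.tgt α0, hloop.symm⟩) := by
  rw [← pivots_filter_ne hloop.symm β]
  exact inCellOn_iff.mp hW'.2.2 ⟨R.tgt α0, hloop.symm⟩

variable (e : {b : B // R.vtx b = R.src α0} ≃o {b : B // R.vtx b = R.tgt α0})

section MapsBasisTo

variable (he : ∀ i, R.mmap α0 (Pi.single i 1) = Pi.single (e i) 1)
include he

lemma mapsBasisTo_iff {b b1 : B} :
    R.MapsBasisTo α0 b b1 ↔ ∃ h : R.vtx b = R.src α0, (e ⟨b, h⟩ : B) = b1 := by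
  constructor
  · rintro ⟨h0, h1, hb⟩
    refine ⟨h0, by_contra fun hne => ?_⟩
    have hb' : R.mmap α0 (Pi.single ⟨b, h0⟩ 1) = Pi.single ⟨b1, h1⟩ 1 := by convert hb
    have := congrFun (hb'.symm.trans (he _)) (e ⟨b, h0⟩)
    simp [Subtype.ext_iff, hne] at this
  · rintro ⟨h0, rfl⟩
    exact ⟨h0, (e _).2, by convert he ⟨b, h0⟩⟩

lemma exists_mapsBasisTo_iff {b' : B} (hb' : R.vtx b' = R.tgt α0) :
    (∃ b0 ∈ β, R.MapsBasisTo α0 b0 b') ↔ (e.symm ⟨b', hb'⟩ : B) ∈ β := by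
  simp only [mapsBasisTo_iff e he]
  constructor
  · rintro ⟨b0, hb0, h0, rfl⟩
    simpa using hb0
  · intro h
    exact ⟨_, h, (e.symm _).2, by simp⟩

lemma mapsTo_pivots
    (himg : ∀ b0 ∈ β, R.vtx b0 = R.src α0 → ∃ b1 ∈ β, R.MapsBasisTo α0 b0 b1) :
    MapsTo e (R.pivots (R.src α0) β) (R.pivots (R.tgt α0) β) := by
  intro x hx
  obtain ⟨b1, hb1, hm⟩ := himg x.1 hx x.2
  obtain ⟨_, rfl⟩ := (mapsBasisTo_iff e he).mp hm
  exact hb1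

lemma card_freeCoord [Fintype B] :
    Fintype.card (FreeCoord e (R.pivots (R.src α0) β) (R.pivots (R.tgt α0) β)) =
      ∑ b ∈ β.filter (fun b => R.vtx b = R.src α0),
        (β.filter (fun b' => R.vtx b' = R.tgt α0 ∧
          (∃ b1 : B, R.MapsBasisTo α0 b b1 ∧ b' < b1) ∧
          ¬ ∃ b0 ∈ β, R.MapsBasisTo α0 b0 b')).card := by
  rw [← Finset.card_sigma, ← Finset.card_univ]
  refine Finset.card_bij (fun jc _ => ⟨jc.1.1.1.1, jc.1.2.1.1⟩) ?_ ?_ ?_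
  · rintro ⟨⟨⟨⟨b, hb⟩, hbβ⟩, ⟨⟨b', hb'⟩, hb'β⟩⟩, hlt, hn⟩ -
    simp only [Finset.mem_sigma, Finset.mem_filter]
    rw [exists_mapsBasisTo_iff e he hb']
    simp only [mapsBasisTo_iff e he]
    exact ⟨⟨hbβ, hb⟩, hb'β, hb', ⟨_, ⟨hb, rfl⟩, hlt⟩, hn⟩
  · rintro ⟨⟨j, c⟩, _⟩ - ⟨⟨j', c'⟩, _⟩ - h
    simp only [Sigma.mk.injEq, heq_eq_eq] at h
    ext <;> simp [h.1, h.2]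
  · rintro ⟨b, b'⟩ hm
    simp only [Finset.mem_sigma, Finset.mem_filter] at hm
    obtain ⟨⟨hbβ, hb⟩, hb'β, hb', ⟨_, hm1, hlt⟩, hn⟩ := hm
    obtain ⟨_, rfl⟩ := (mapsBasisTo_iff e he).mp hm1
    rw [exists_mapsBasisTo_iff e he hb'] at hn
    exact ⟨⟨(⟨⟨b, hb⟩, hbβ⟩, ⟨⟨b', hb'⟩, hb'β⟩), hlt, hn⟩, Finset.mem_univ _, rfl⟩

end MapsBasisTo

variable [Fintype B]

lemma glue_mem_cell (hmap : ∀ x, R.mmap α0 x = x ∘ e.symm) (hloop : R.src α0 ≠ R.tgt α0)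
    (hend : ∀ a : A, a ≠ α0 → R.src a ≠ R.src α0 ∧ R.tgt a ≠ R.src α0)
    (hmaps : MapsTo e (R.pivots (R.src α0) β) (R.pivots (R.tgt α0) β))
    {W' : R.SubRepOn {r | r ≠ R.src α0}}
    (hW' : W' ∈ R.CellOn {r | r ≠ R.src α0} {a | a ≠ α0}
      (β.filter fun b => R.vtx b ≠ R.src α0))
    (μ : FreeCoord e (R.pivots (R.src α0) β) (R.pivots (R.tgt α0) β) → K) :
    R.glue (R.src α0) W' (span K (range (liftFamily e _ _
      (isEchelonSpan_tgt hloop hW').basis μ))) ∈ R.Cell β := by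
  set hq := isEchelonSpan_tgt hloop hW'
  have hech : ∀ r, IsEchelonSpan (R.pivots r β) (R.glue (R.src α0) W'
      (span K (range (liftFamily e _ _ hq.basis μ))) r) := by
    intro r
    by_cases hr : r = R.src α0
    · subst hr
      rw [glue_self]
      exact ⟨_, isEchelon_liftFamily hq.isEchelon_basis hmaps, rfl⟩
    · rw [glue_of_ne hr, ← pivots_filter_ne hr β]
      exact inCellOn_iff.mp hW'.2.2 ⟨r, hr⟩
  refine ⟨fun a x hx => ?_, fun r => finrank_eq_card_filter (hech r), inCell_iff.mpr hech⟩
  by_cases ha : a = α0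
  · subst ha
    rw [glue_self] at hx
    rw [glue_of_ne hloop.symm, hmap, hq.eq_span_basis]
    exact comp_symm_mem_of_mem_span_liftFamily hx
  · obtain ⟨hs, ht⟩ := hend a ha
    rw [glue_of_ne hs] at hx
    rw [glue_of_ne ht]
    exact hW'.1 a ha hs ht x hx

def cellEquiv (hmap : ∀ x, R.mmap α0 x = x ∘ e.symm) (hloop : R.src α0 ≠ R.tgt α0)
    (hend : ∀ a : A, a ≠ α0 → R.src a ≠ R.src α0 ∧ R.tgt a ≠ R.src α0)
    (hmaps : MapsTo e (R.pivots (R.src α0) β) (R.pivots (R.tgt α0) β)) :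
    R.Cell β ≃ R.CellOn {r | r ≠ R.src α0} {a | a ≠ α0}
        (β.filter fun b => R.vtx b ≠ R.src α0) ×
      (FreeCoord e (R.pivots (R.src α0) β) (R.pivots (R.tgt α0) β) → K) where
  toFun W := (⟨_, resOn_mem_cellOn _ _ W.2⟩,
    freeCoords e _ _ (inCell_iff.mp W.2.2.2 (R.src α0)).basis)
  invFun Wμ := ⟨_, glue_mem_cell e hmap hloop hend hmaps Wμ.1.2 Wμ.2⟩
  left_inv W := Subtype.ext <| by
    dsimp only
    rw [span_liftFamily_freeCoords_basis
      (isEchelonSpan_tgt hloop (resOn_mem_cellOn _ {a | a ≠ α0} W.2)).isEchelon_basis _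
      fun x hx => ?_, glue_resOn_self]
    rw [← hmap, ← (isEchelonSpan_tgt hloop (resOn_mem_cellOn _ {a | a ≠ α0} W.2)).eq_span_basis]
    exact W.2.1 α0 x hx
  right_inv Wμ := Prod.ext (Subtype.ext resOn_glue)
    (freeCoords_basis_of_eq_span (isEchelonSpan_tgt hloop Wμ.1.2).isEchelon_basis hmaps _
      glue_self)

end RemoveSource

end Rep

end QGr

open QGr in
theorem schubert_cell_remove_source_general
    {K V0 A B : Type} [Field K] [Fintype B] [LinearOrder B]
    (R : Rep K V0 A B) (hlin : R.Linear)
    (α0 : A) (hloop : R.src α0 ≠ R.tgt α0)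
    (hend : ∀ a : A, a ≠ α0 → R.src a ≠ R.src α0 ∧ R.tgt a ≠ R.src α0)
    (hid : R.IsIdMat α0)
    (β : Finset B)
    (himg : ∀ b0 ∈ β, R.vtx b0 = R.src α0 → ∃ b1 ∈ β, R.MapsBasisTo α0 b0 b1) :
    ∃ e : ↥(R.Cell β) ≃
        ↥(R.CellOn {r : V0 | r ≠ R.src α0} {a : A | a ≠ α0}
            (β.filter fun b => R.vtx b ≠ R.src α0)) ×
        (Fin (∑ b ∈ β.filter (fun b => R.vtx b = R.src α0),
          (β.filter (fun b' => R.vtx b' = R.tgt α0 ∧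
            (∃ b1 : B, R.MapsBasisTo α0 b b1 ∧ b' < b1) ∧
            ¬ ∃ b0 ∈ β, R.MapsBasisTo α0 b0 b')).card) → K),
      ∀ W : ↥(R.Cell β),
        ((e W).1 : R.SubRepOn {r : V0 | r ≠ R.src α0}) =
          R.resOn {r : V0 | r ≠ R.src α0} W.val := by
  obtain ⟨e, he⟩ := hid
  have hmap := (hlin α0).eq_comp_symm_of_map_single e.toEquiv he
  refine ⟨(Rep.cellEquiv e hmap hloop hend (Rep.mapsTo_pivots e he himg)).trans
    (Equiv.prodCongr (Equiv.refl _)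
      (Equiv.arrowCongr (Fintype.equivFinOfCardEq (Rep.card_freeCoord e he)) (Equiv.refl K))),
    fun _ => rfl⟩

open QGr in
/-- Let `α₀ : p → q` be an arrow of `T` such that `p` is incident to no other
arrow, and let `T'` be `T` with `p` and `α₀` removed.  If the ordered basis `B` puts all of
`B_p` at the end of `B` and the matrix of `M_{α₀}` is the identity, and if
`M_{α₀}(β_p) ⊆ β_q`, then `C_β^M ≅ C_{β'}^{M'} × K^n` (first component the restriction
to `T'`) with `n = Σ_{b ∈ β_p} #{b' ∈ β_q : b' < M_{α₀}(b), b' ∉ M_{α₀}(β_p)}`. -/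
theorem schubert_cell_remove_source
    {K V0 A B : Type} [Field K] [Fintype V0] [Fintype A] [Fintype B] [LinearOrder B]
    (R : Rep K V0 A B) (hlin : R.Linear)
    (α0 : A) (hloop : R.src α0 ≠ R.tgt α0)
    (hend : ∀ a : A, a ≠ α0 → R.src a ≠ R.src α0 ∧ R.tgt a ≠ R.src α0)
    (hord : ∀ b b' : B, R.vtx b ≠ R.src α0 → R.vtx b' = R.src α0 → b < b')
    (hid : R.IsIdMat α0)
    (β : Finset B)
    (himg : ∀ b0 ∈ β, R.vtx b0 = R.src α0 → ∃ b1 ∈ β, R.MapsBasisTo α0 b0 b1) :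
    ∃ e : ↥(R.Cell β) ≃
        ↥(R.CellOn {r : V0 | r ≠ R.src α0} {a : A | a ≠ α0}
            (β.filter fun b => R.vtx b ≠ R.src α0)) ×
        (Fin (∑ b ∈ β.filter (fun b => R.vtx b = R.src α0),
          (β.filter (fun b' => R.vtx b' = R.tgt α0 ∧
            (∃ b1 : B, R.MapsBasisTo α0 b b1 ∧ b' < b1) ∧
            ¬ ∃ b0 ∈ β, R.MapsBasisTo α0 b0 b')).card) → K),
      ∀ W : ↥(R.Cell β),
        ((e W).1 : R.SubRepOn {r : V0 | r ≠ R.src α0}) =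
          R.resOn {r : V0 | r ≠ R.src α0} W.val :=
  schubert_cell_remove_source_general R hlin α0 hloop hend hid β himg
end
end

section
/- Let T be a quiver, α₀ : p → q an arrow such that the vertex q is incident to no arrow of T other than α₀, and T' the quiver obtained from T by removing q and α₀. Let M be a representation of T over a field K with M_{α₀} an isomorphism, M' the restriction of M to T', e a dimension vector for T with e_p ≤ e_q ≤ dim M_q, and e' the restriction of e to T'. Then for every V' ∈ Gr_{e'}(M'), the fibre of the restriction map Gr_e(M) → Gr_{e'}(M') over V', namely the set {V_q ⊆ M_q : dim V_q = e_q and M_{α₀}(V'_p) ⊆ V_q}, is in bijection with the Grassmannian of (e_q − e_p)-dimensional subspaces of the (dim M_q − e_p)-dimensional quotient space M_q / M_{α₀}(V'_p). In particular all fibres are in bijection with the Grassmannian Gr(e_q − e_p, dim M_q − e_p). -/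
/-!
Since `q` is a sink touched only by `α₀`, a subrepresentation `V` lying over `V'` is the same
as a subspace `V_q` of dimension `e_q` containing `N = M_{α₀}(V'_p)`, which has dimension `e_p`
because `M_{α₀}` is injective. By the correspondence theorem these subspaces are the
`(e_q - e_p)`-dimensional subspaces of `M_q ⧸ N`, a space of dimension `dim M_q - e_p`.
-/

open scoped Classical

open Module

namespace Submodule

variable {K M : Type*} [DivisionRing K] [AddCommGroup M] [Module K M]

theorem finrank_map_mkQ_add_finrank [FiniteDimensional K M] {N X : Submodule K M} (h : N ≤ X) :
    finrank K (X.map N.mkQ) + finrank K N = finrank K X := by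
  have := LinearMap.finrank_range_add_finrank_ker (N.mkQ.domRestrict X)
  rwa [LinearMap.range_domRestrict, LinearMap.ker_domRestrict, ker_mkQ,
    (comapSubtypeEquivOfLe h).finrank_eq] at this

noncomputable def superspacesEquivQuotient [FiniteDimensional K M] (N : Submodule K M)
    {n k : ℕ} (hn : finrank K N = n) (hk : n ≤ k) :
    {X : Submodule K M // N ≤ X ∧ finrank K X = k} ≃
      {U : Submodule K (M ⧸ N) // finrank K U = k - n} where
  toFun X := ⟨X.1.map N.mkQ, by have := finrank_map_mkQ_add_finrank X.2.1; omega⟩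
  invFun U := ⟨U.1.comap N.mkQ, le_comap_mkQ N U.1, by
    have := finrank_map_mkQ_add_finrank (le_comap_mkQ N U.1)
    rw [map_comap_eq_of_surjective N.mkQ_surjective, U.2] at this
    omega⟩
  left_inv X := Subtype.ext <| by simp only [comap_map_mkQ, sup_eq_right.2 X.2.1]
  right_inv U := Subtype.ext <| map_comap_eq_of_surjective N.mkQ_surjective U.1

end Submodule

noncomputable def LinearEquiv.submodulesOfFinrankEquiv {K M M₂ : Type*} [DivisionRing K]
    [AddCommGroup M] [Module K M] [AddCommGroup M₂] [Module K M₂] (φ : M ≃ₗ[K] M₂) (k : ℕ) :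
    {U : Submodule K M // finrank K U = k} ≃ {U : Submodule K M₂ // finrank K U = k} :=
  (Submodule.orderIsoMapComap φ).toEquiv.subtypeEquiv fun U => by
    change _ ↔ finrank K (U.map (φ : M →ₗ[K] M₂)) = k
    rw [LinearEquiv.finrank_map_eq]

section RemoveSink

variable {K V0 A : Type*} [Semiring K] {src tgt : A → V0} {Mod : V0 → Type*}
  [∀ p, AddCommGroup (Mod p)] [∀ p, Module K (Mod p)]
  {mmap : ∀ a : A, Mod (src a) →ₗ[K] Mod (tgt a)} {α0 : A}
  {V' : ∀ r : {r : V0 // r ≠ tgt α0}, Submodule K (Mod r.val)}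

theorem isSubrep_iff_map_le_of_restrict_eq (hloop : src α0 ≠ tgt α0)
    (hend : ∀ a : A, a ≠ α0 → src a ≠ tgt α0 ∧ tgt a ≠ tgt α0)
    (hsub : ∀ a : A, ∀ (h1 : src a ≠ tgt α0) (h2 : tgt a ≠ tgt α0),
      ∀ x ∈ V' ⟨src a, h1⟩, mmap a x ∈ V' ⟨tgt a, h2⟩)
    {W : ∀ r : V0, Submodule K (Mod r)} (hW : ∀ r (h : r ≠ tgt α0), W r = V' ⟨r, h⟩) :
    (∀ a : A, ∀ x ∈ W (src a), mmap a x ∈ W (tgt a)) ↔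
      (V' ⟨src α0, hloop⟩).map (mmap α0) ≤ W (tgt α0) := by
  constructor
  · rintro hW' _ ⟨x, hx, rfl⟩
    exact hW' α0 x (hW _ hloop ▸ hx)
  · intro hN a x hx
    by_cases ha : a = α0
    · subst ha
      exact hN ⟨x, hW _ hloop ▸ hx, rfl⟩
    · obtain ⟨h1, h2⟩ := hend a ha
      rw [hW _ h1] at hx
      rw [hW _ h2]
      exact hsub a h1 h2 x hx

noncomputable def fibreEquivSuperspaces (hloop : src α0 ≠ tgt α0)
    (hend : ∀ a : A, a ≠ α0 → src a ≠ tgt α0 ∧ tgt a ≠ tgt α0)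
    (hsub : ∀ a : A, ∀ (h1 : src a ≠ tgt α0) (h2 : tgt a ≠ tgt α0),
      ∀ x ∈ V' ⟨src a, h1⟩, mmap a x ∈ V' ⟨tgt a, h2⟩)
    {e : V0 → ℕ} (hrank : ∀ r, finrank K (V' r) = e r.val) :
    {W : ∀ r : V0, Submodule K (Mod r) //
        (∀ a : A, ∀ x ∈ W (src a), mmap a x ∈ W (tgt a)) ∧
        (∀ r : V0, finrank K (W r) = e r) ∧
        (∀ r : {r : V0 // r ≠ tgt α0}, W r.val = V' r)} ≃
      {X : Submodule K (Mod (tgt α0)) //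
        (V' ⟨src α0, hloop⟩).map (mmap α0) ≤ X ∧ finrank K X = e (tgt α0)} where
  toFun W := ⟨W.1 (tgt α0),
    (isSubrep_iff_map_le_of_restrict_eq hloop hend hsub fun r h => W.2.2.2 ⟨r, h⟩).1 W.2.1,
    W.2.2.1 _⟩
  invFun X :=
    let split := Equiv.piSplitAt (tgt α0) fun r => Submodule K (Mod r)
    have hX : split.symm (X.1, V') (tgt α0) = X.1 :=
      congrArg Prod.fst (split.apply_symm_apply (X.1, V'))
    have hW : ∀ r (h : r ≠ tgt α0), split.symm (X.1, V') r = V' ⟨r, h⟩ := fun r h =>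
      congrFun (congrArg Prod.snd (split.apply_symm_apply (X.1, V'))) ⟨r, h⟩
    ⟨split.symm (X.1, V'),
      (isSubrep_iff_map_le_of_restrict_eq hloop hend hsub hW).2 (hX.symm ▸ X.2.1),
      fun r => by
        by_cases h : r = tgt α0
        · subst h; rw [hX, X.2.2]
        · rw [hW r h, hrank ⟨r, h⟩],
      fun r => hW r r.2⟩
  left_inv W := Subtype.ext <| (Equiv.piSplitAt _ _).symm_apply_eq.2 <|
    Prod.ext rfl <| funext fun r => (W.2.2.2 r).symm
  right_inv X := Subtype.ext <| congrArg Prod.fst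
    ((Equiv.piSplitAt (tgt α0) fun r => Submodule K (Mod r)).apply_symm_apply (X.1, V'))

end RemoveSink

theorem quiver_grassmannian_fibre_remove_sink_general
    {K V0 A : Type} [Field K]
    (src tgt : A → V0)
    (Mod : V0 → Type) [∀ p, AddCommGroup (Mod p)] [∀ p, Module K (Mod p)]
    [∀ p, FiniteDimensional K (Mod p)]
    (mmap : ∀ a : A, Mod (src a) →ₗ[K] Mod (tgt a))
    (α0 : A) (hloop : src α0 ≠ tgt α0)
    (hend : ∀ a : A, a ≠ α0 → src a ≠ tgt α0 ∧ tgt a ≠ tgt α0)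
    (hiso : Function.Bijective (mmap α0))
    (e : V0 → ℕ) (he1 : e (src α0) ≤ e (tgt α0)) :
    ∀ V' : ∀ r : {r : V0 // r ≠ tgt α0}, Submodule K (Mod r.val),
      (∀ a : A, ∀ (h1 : src a ≠ tgt α0) (h2 : tgt a ≠ tgt α0),
        ∀ x ∈ V' ⟨src a, h1⟩, mmap a x ∈ V' ⟨tgt a, h2⟩) →
      (∀ r, Module.finrank K (V' r) = e r.val) →
      Nonempty
        ({W : ∀ r : V0, Submodule K (Mod r) //
            (∀ a : A, ∀ x ∈ W (src a), mmap a x ∈ W (tgt a)) ∧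
            (∀ r : V0, Module.finrank K (W r) = e r) ∧
            (∀ r : {r : V0 // r ≠ tgt α0}, W r.val = V' r)} ≃
          {U : Submodule K
              ((Mod (tgt α0)) ⧸ Submodule.map (mmap α0) (V' ⟨src α0, hloop⟩)) //
            Module.finrank K U = e (tgt α0) - e (src α0)}) ∧
      Nonempty
        ({W : ∀ r : V0, Submodule K (Mod r) //
            (∀ a : A, ∀ x ∈ W (src a), mmap a x ∈ W (tgt a)) ∧
            (∀ r : V0, Module.finrank K (W r) = e r) ∧
            (∀ r : {r : V0 // r ≠ tgt α0}, W r.val = V' r)} ≃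
          {U : Submodule K
              (Fin (Module.finrank K (Mod (tgt α0)) - e (src α0)) → K) //
            Module.finrank K U = e (tgt α0) - e (src α0)}) := by
  intro V' hsub hrank
  set N := (V' ⟨src α0, hloop⟩).map (mmap α0)
  have hN : finrank K N = e (src α0) := by
    rw [← hrank ⟨src α0, hloop⟩]
    exact (Submodule.equivMapOfInjective _ hiso.injective _).finrank_eq.symm
  let fibreEquiv := (fibreEquivSuperspaces hloop hend hsub hrank).trans
    (N.superspacesEquivQuotient hN he1)
  have hQ : finrank K (Mod (tgt α0) ⧸ N) =
      finrank K (Fin (finrank K (Mod (tgt α0)) - e (src α0)) → K) := by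
    rw [Submodule.finrank_quotient, hN, finrank_fin_fun]
  exact ⟨⟨fibreEquiv⟩,
    ⟨fibreEquiv.trans ((LinearEquiv.ofFinrankEq _ _ hQ).submodulesOfFinrankEquiv _)⟩⟩

/-- Let `α₀ : p → q` be an arrow of the quiver `T` such that `q` is not
incident to any other arrow, `T'` the quiver with `q` and `α₀` removed, `M` a representation
with `M_{α₀}` an isomorphism, and `e` a dimension vector with `e_p ≤ e_q ≤ dim M_q`.  Then
the fibre of the restriction map `Gr_e(M) → Gr_{e'}(M')` over any `V' ∈ Gr_{e'}(M')` is in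
bijection with the Grassmannian of `(e_q − e_p)`-dimensional subspaces of the
`(dim M_q − e_p)`-dimensional quotient `M_q / M_{α₀}(V'_p)`; in particular with the
Grassmannian `Gr(e_q − e_p, dim M_q − e_p)`. -/
theorem quiver_grassmannian_fibre_remove_sink
    {K V0 A : Type} [Field K] [Fintype V0] [Fintype A]
    (src tgt : A → V0)
    (Mod : V0 → Type) [∀ p, AddCommGroup (Mod p)] [∀ p, Module K (Mod p)]
    [∀ p, FiniteDimensional K (Mod p)]
    (mmap : ∀ a : A, Mod (src a) →ₗ[K] Mod (tgt a))
    (α0 : A) (hloop : src α0 ≠ tgt α0)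
    (hend : ∀ a : A, a ≠ α0 → src a ≠ tgt α0 ∧ tgt a ≠ tgt α0)
    (hiso : Function.Bijective (mmap α0))
    (e : V0 → ℕ) (he1 : e (src α0) ≤ e (tgt α0))
    (he2 : e (tgt α0) ≤ Module.finrank K (Mod (tgt α0))) :
    ∀ V' : ∀ r : {r : V0 // r ≠ tgt α0}, Submodule K (Mod r.val),
      (∀ a : A, ∀ (h1 : src a ≠ tgt α0) (h2 : tgt a ≠ tgt α0),
        ∀ x ∈ V' ⟨src a, h1⟩, mmap a x ∈ V' ⟨tgt a, h2⟩) →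
      (∀ r, Module.finrank K (V' r) = e r.val) →
      Nonempty
        ({W : ∀ r : V0, Submodule K (Mod r) //
            (∀ a : A, ∀ x ∈ W (src a), mmap a x ∈ W (tgt a)) ∧
            (∀ r : V0, Module.finrank K (W r) = e r) ∧
            (∀ r : {r : V0 // r ≠ tgt α0}, W r.val = V' r)} ≃
          {U : Submodule K
              ((Mod (tgt α0)) ⧸ Submodule.map (mmap α0) (V' ⟨src α0, hloop⟩)) //
            Module.finrank K U = e (tgt α0) - e (src α0)}) ∧
      Nonempty
        ({W : ∀ r : V0, Submodule K (Mod r) //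
            (∀ a : A, ∀ x ∈ W (src a), mmap a x ∈ W (tgt a)) ∧
            (∀ r : V0, Module.finrank K (W r) = e r) ∧
            (∀ r : {r : V0 // r ≠ tgt α0}, W r.val = V' r)} ≃
          {U : Submodule K
              (Fin (Module.finrank K (Mod (tgt α0)) - e (src α0)) → K) //
            Module.finrank K U = e (tgt α0) - e (src α0)}) :=
  quiver_grassmannian_fibre_remove_sink_general src tgt Mod mmap α0 hloop hend hiso e he1
end

section
/- Let T be a quiver, α₀ : p → q an arrow such that the vertex p is incident to no arrow of T other than α₀, and T' the quiver obtained from T by removing p and α₀. Let M be a representation of T over a field K with M_{α₀} an isomorphism, M' the restriction of M to T', e a dimension vector for T with e_p ≤ e_q, and e' the restriction of e to T'. Then for every V' ∈ Gr_{e'}(M'), the fibre of the restriction map Gr_e(M) → Gr_{e'}(M') over V', namely the set {V_p ⊆ M_p : dim V_p = e_p and M_{α₀}(V_p) ⊆ V'_q}, is in bijection with the set of e_p-dimensional subspaces of the e_q-dimensional space M_{α₀}⁻¹(V'_q). In particular all fibres are in bijection with the Grassmannian Gr(e_p, e_q). -/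
open scoped Classical

/-!
Since `p = src α₀` meets no arrow but `α₀`, a subrepresentation in the fibre over `V'` is
determined by its space `U` at `p`, and the only condition on `U` is the one imposed by `α₀`,
namely `U ≤ M_{α₀}⁻¹(V'_q)`. Subspaces of `M_p` contained in `S := M_{α₀}⁻¹(V'_q)` are the
subspaces of `S`, and `S ≅ V'_q ≅ K^{e_q}` because `M_{α₀}` is an isomorphism.
-/

open Module

namespace LinearEquiv

variable {R M N : Type*} [Semiring R] [AddCommMonoid M] [AddCommMonoid N] [Module R M] [Module R N]

theorem finrank_comap_eq (f : M ≃ₗ[R] N) (V : Submodule R N) :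
    finrank R (V.comap (f : M →ₗ[R] N)) = finrank R V := by
  rw [Submodule.comap_equiv_eq_map_symm, finrank_map_eq]

def finrankSubmodulesCongr (f : M ≃ₗ[R] N) (k : ℕ) :
    {U : Submodule R M // finrank R U = k} ≃ {U : Submodule R N // finrank R U = k} :=
  (Submodule.orderIsoMapComap f).toEquiv.subtypeEquiv fun U => by
    rw [← finrank_map_eq f U]
    rfl

end LinearEquiv

def Submodule.finrankSubmodulesEquivLE {R M : Type*} [Semiring R] [AddCommMonoid M] [Module R M]
    (S : Submodule R M) (k : ℕ) :
    {U : Submodule R S // finrank R U = k} ≃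
      {U : Submodule R M // U ≤ S ∧ finrank R U = k} where
  toFun U := ⟨U.1.map S.subtype, map_subtype_le S U.1, by rw [finrank_map_subtype_eq, U.2]⟩
  invFun U := ⟨U.1.comap S.subtype, by rw [(comapSubtypeEquivOfLe U.2.1).finrank_eq, U.2.2]⟩
  left_inv U := Subtype.ext (comap_map_eq_of_injective S.injective_subtype U.1)
  right_inv U := Subtype.ext (by simp only [map_comap_subtype, inf_eq_right.mpr U.2.1])

namespace QuiverRepresentation

variable {R V0 A : Type*} [Semiring R] {src tgt : A → V0} {Mod : V0 → Type*}
  [∀ p, AddCommMonoid (Mod p)] [∀ p, Module R (Mod p)]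

def IsSubrepresentation (mmap : ∀ a : A, Mod (src a) →ₗ[R] Mod (tgt a))
    (W : ∀ r, Submodule R (Mod r)) : Prop :=
  ∀ a : A, ∀ x ∈ W (src a), mmap a x ∈ W (tgt a)

def restrictionFibre (mmap : ∀ a : A, Mod (src a) →ₗ[R] Mod (tgt a)) (e : V0 → ℕ) (p : V0)
    (V' : ∀ r : {r // r ≠ p}, Submodule R (Mod r)) : Type _ :=
  {W : ∀ r, Submodule R (Mod r) //
    IsSubrepresentation mmap W ∧ (∀ r, finrank R (W r) = e r) ∧
      ∀ r : {r // r ≠ p}, W r.val = V' r}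

section ExtendAt

variable {p : V0} (V' : ∀ r : {r // r ≠ p}, Submodule R (Mod r)) (U : Submodule R (Mod p))

noncomputable def extendAt : ∀ r, Submodule R (Mod r) :=
  fun r => if h : r = p then h ▸ U else V' ⟨r, h⟩

@[simp]
theorem extendAt_self : extendAt V' U p = U := by
  simp [extendAt]

@[simp]
theorem extendAt_of_ne {r : V0} (h : r ≠ p) : extendAt V' U r = V' ⟨r, h⟩ := by
  simp [extendAt, h]

theorem eq_extendAt_of_restrict_eq {W : ∀ r, Submodule R (Mod r)}
    (hW : ∀ r : {r // r ≠ p}, W r.val = V' r) : W = extendAt V' (W p) := by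
  funext r
  by_cases h : r = p
  · subst h
    rw [extendAt_self]
  · rw [extendAt_of_ne _ _ h, hW ⟨r, h⟩]

end ExtendAt

section RemoveSource

variable {mmap : ∀ a : A, Mod (src a) →ₗ[R] Mod (tgt a)} {α0 : A}
  {V' : ∀ r : {r // r ≠ src α0}, Submodule R (Mod r.val)}

theorem isSubrepresentation_extendAt_iff (hloop : src α0 ≠ tgt α0)
    (hend : ∀ a : A, a ≠ α0 → src a ≠ src α0 ∧ tgt a ≠ src α0)
    (hV' : ∀ a : A, ∀ (h1 : src a ≠ src α0) (h2 : tgt a ≠ src α0),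
      ∀ x ∈ V' ⟨src a, h1⟩, mmap a x ∈ V' ⟨tgt a, h2⟩)
    (U : Submodule R (Mod (src α0))) :
    IsSubrepresentation mmap (extendAt V' U) ↔
      U ≤ (V' ⟨tgt α0, Ne.symm hloop⟩).comap (mmap α0) := by
  constructor
  · intro hW x hx
    simpa [Ne.symm hloop] using hW α0 x (by simpa using hx)
  · intro hU a x hx
    by_cases ha : a = α0
    · subst ha
      rw [extendAt_of_ne _ _ (Ne.symm hloop)]
      exact hU (by simpa using hx)
    · obtain ⟨h1, h2⟩ := hend a ha
      rw [extendAt_of_ne _ _ h1] at hx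
      rw [extendAt_of_ne _ _ h2]
      exact hV' a h1 h2 x hx

noncomputable def restrictionFibreEquiv (hloop : src α0 ≠ tgt α0)
    (hend : ∀ a : A, a ≠ α0 → src a ≠ src α0 ∧ tgt a ≠ src α0)
    (hV' : ∀ a : A, ∀ (h1 : src a ≠ src α0) (h2 : tgt a ≠ src α0),
      ∀ x ∈ V' ⟨src a, h1⟩, mmap a x ∈ V' ⟨tgt a, h2⟩)
    (e : V0 → ℕ) (hrank : ∀ r, finrank R (V' r) = e r.val) :
    restrictionFibre mmap e (src α0) V' ≃
      {U : Submodule R (Mod (src α0)) //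
        U ≤ (V' ⟨tgt α0, Ne.symm hloop⟩).comap (mmap α0) ∧
          finrank R U = e (src α0)} where
  toFun W := ⟨W.1 (src α0), by
    obtain ⟨W, hW, hWrank, hWres⟩ := W
    refine ⟨?_, hWrank _⟩
    rw [← isSubrepresentation_extendAt_iff hloop hend hV',
      ← eq_extendAt_of_restrict_eq V' hWres]
    exact hW⟩
  invFun U := ⟨extendAt V' U.1, (isSubrepresentation_extendAt_iff hloop hend hV' U.1).2 U.2.1,
    fun r => by
      by_cases h : r = src α0
      · subst h
        rw [extendAt_self, U.2.2]
      · rw [extendAt_of_ne V' U.1 h]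
        exact hrank ⟨r, h⟩,
    fun r => extendAt_of_ne _ _ r.2⟩
  left_inv W := Subtype.ext (eq_extendAt_of_restrict_eq V' W.2.2.2).symm
  right_inv U := Subtype.ext (extendAt_self V' U.1)

end RemoveSource

end QuiverRepresentation

open QuiverRepresentation in
theorem quiver_grassmannian_fibre_remove_source_general
    {K V0 A : Type} [Field K]
    (src tgt : A → V0)
    (Mod : V0 → Type) [∀ p, AddCommGroup (Mod p)] [∀ p, Module K (Mod p)]
    [∀ p, FiniteDimensional K (Mod p)]
    (mmap : ∀ a : A, Mod (src a) →ₗ[K] Mod (tgt a))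
    (α0 : A) (hloop : src α0 ≠ tgt α0)
    (hend : ∀ a : A, a ≠ α0 → src a ≠ src α0 ∧ tgt a ≠ src α0)
    (hiso : Function.Bijective (mmap α0))
    (e : V0 → ℕ) :
    ∀ V' : ∀ r : {r : V0 // r ≠ src α0}, Submodule K (Mod r.val),
      (∀ a : A, ∀ (h1 : src a ≠ src α0) (h2 : tgt a ≠ src α0),
        ∀ x ∈ V' ⟨src a, h1⟩, mmap a x ∈ V' ⟨tgt a, h2⟩) →
      (∀ r, Module.finrank K (V' r) = e r.val) →
      Nonempty
        ({W : ∀ r : V0, Submodule K (Mod r) //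
            (∀ a : A, ∀ x ∈ W (src a), mmap a x ∈ W (tgt a)) ∧
            (∀ r : V0, Module.finrank K (W r) = e r) ∧
            (∀ r : {r : V0 // r ≠ src α0}, W r.val = V' r)} ≃
          {U : Submodule K
              ↥(Submodule.comap (mmap α0) (V' ⟨tgt α0, Ne.symm hloop⟩)) //
            Module.finrank K U = e (src α0)}) ∧
      Nonempty
        ({W : ∀ r : V0, Submodule K (Mod r) //
            (∀ a : A, ∀ x ∈ W (src a), mmap a x ∈ W (tgt a)) ∧
            (∀ r : V0, Module.finrank K (W r) = e r) ∧
            (∀ r : {r : V0 // r ≠ src α0}, W r.val = V' r)} ≃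
          {U : Submodule K (Fin (e (tgt α0)) → K) //
            Module.finrank K U = e (src α0)}) := by
  intro V' hV' hrank
  set S := (V' ⟨tgt α0, Ne.symm hloop⟩).comap (mmap α0)
  have hS : finrank K S = e (tgt α0) :=
    ((LinearEquiv.ofBijective _ hiso).finrank_comap_eq _).trans (hrank ⟨tgt α0, Ne.symm hloop⟩)
  let fibreEquiv : restrictionFibre mmap e (src α0) V' ≃
      {U : Submodule K S // finrank K U = e (src α0)} :=
    (restrictionFibreEquiv hloop hend hV' e hrank).trans (S.finrankSubmodulesEquivLE _).symm
  let coords : S ≃ₗ[K] (Fin (e (tgt α0)) → K) :=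
    LinearEquiv.ofFinrankEq _ _ (by rw [hS, finrank_fin_fun])
  exact ⟨⟨fibreEquiv⟩, ⟨fibreEquiv.trans (coords.finrankSubmodulesCongr _)⟩⟩

/-- Let `α₀ : p → q` be an arrow of the quiver `T` such that `p` is not
incident to any other arrow, `T'` the quiver with `p` and `α₀` removed, `M` a representation
with `M_{α₀}` an isomorphism, and `e` a dimension vector with `e_p ≤ e_q`.  Then the fibre of
the restriction map `Gr_e(M) → Gr_{e'}(M')` over any `V' ∈ Gr_{e'}(M')` is in bijection with
the set of `e_p`-dimensional subspaces of the `e_q`-dimensional space `M_{α₀}⁻¹(V'_q)`; in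
particular with the Grassmannian `Gr(e_p, e_q)`. -/
theorem quiver_grassmannian_fibre_remove_source
    {K V0 A : Type} [Field K] [Fintype V0] [Fintype A]
    (src tgt : A → V0)
    (Mod : V0 → Type) [∀ p, AddCommGroup (Mod p)] [∀ p, Module K (Mod p)]
    [∀ p, FiniteDimensional K (Mod p)]
    (mmap : ∀ a : A, Mod (src a) →ₗ[K] Mod (tgt a))
    (α0 : A) (hloop : src α0 ≠ tgt α0)
    (hend : ∀ a : A, a ≠ α0 → src a ≠ src α0 ∧ tgt a ≠ src α0)
    (hiso : Function.Bijective (mmap α0))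
    (e : V0 → ℕ) (he1 : e (src α0) ≤ e (tgt α0)) :
    ∀ V' : ∀ r : {r : V0 // r ≠ src α0}, Submodule K (Mod r.val),
      (∀ a : A, ∀ (h1 : src a ≠ src α0) (h2 : tgt a ≠ src α0),
        ∀ x ∈ V' ⟨src a, h1⟩, mmap a x ∈ V' ⟨tgt a, h2⟩) →
      (∀ r, Module.finrank K (V' r) = e r.val) →
      Nonempty
        ({W : ∀ r : V0, Submodule K (Mod r) //
            (∀ a : A, ∀ x ∈ W (src a), mmap a x ∈ W (tgt a)) ∧
            (∀ r : V0, Module.finrank K (W r) = e r) ∧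
            (∀ r : {r : V0 // r ≠ src α0}, W r.val = V' r)} ≃
          {U : Submodule K
              ↥(Submodule.comap (mmap α0) (V' ⟨tgt α0, Ne.symm hloop⟩)) //
            Module.finrank K U = e (src α0)}) ∧
      Nonempty
        ({W : ∀ r : V0, Submodule K (Mod r) //
            (∀ a : A, ∀ x ∈ W (src a), mmap a x ∈ W (tgt a)) ∧
            (∀ r : V0, Module.finrank K (W r) = e r) ∧
            (∀ r : {r : V0 // r ≠ src α0}, W r.val = V' r)} ≃
          {U : Submodule K (Fin (e (tgt α0)) → K) //
            Module.finrank K U = e (src α0)}) :=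
  quiver_grassmannian_fibre_remove_source_general src tgt Mod mmap α0 hloop hend hiso e
end

section
/- Let K be a field and let Q be the quiver with vertices 1, 2, 3, two arrows g, d : 1 → 2 and one arrow a : 2 → 3. Let N be the representation of Q over K with N_1 = K with basis {c}, N_2 = K³ with ordered basis x_4 < x_5 < x_7, and N_3 = K³ with ordered basis y_1 < y_2 < y_3, where N_g(c) = x_5, N_d(c) = x_7, N_a(x_4) = y_2, N_a(x_5) = y_3 and N_a(x_7) = 0. Let β = {y_2, y_3, x_7}, a subset of type e = (0, 1, 2) of the ordered basis. Then the Schubert cell C_β^N is in bijection with the affine cone {(r, s, u, v) ∈ K⁴ : r·u + s·v = 0}, via sending (r, s, u, v) to the subrepresentation V with V_1 = 0, V_2 = span(x_7 + u·x_4 + v·x_5) and V_3 = span(y_2 + r·y_1, y_3 + s·y_1). -/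
open scoped Classical

noncomputable section

namespace QGr

/-- The candidate point of the Schubert cell in Statement 19, attached to
`(r, s, u, v) ∈ K⁴`: `V₀ = 0`, `V₁ = span(x₇ + u·x₄ + v·x₅)` and
`V₂ = span(y₂ + r·y₁, y₃ + s·y₁)`, where the basis `B = Fin 7` is
`c = 0 < x₄ = 1 < x₅ = 2 < x₇ = 3 < y₁ = 4 < y₂ = 5 < y₃ = 6`. -/
def coneSubrep {K : Type} [Field K] (R : Rep K (Fin 3) (Fin 3) (Fin 7))
    (r s u v : K) : R.SubRep := fun p =>
  Submodule.span K
    {x : {b : Fin 7 // R.vtx b = p} → K |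
      (p = 1 ∧ x = fun b : {b : Fin 7 // R.vtx b = p} => if b.val = 3 then 1 else
        if b.val = 1 then u else if b.val = 2 then v else 0) ∨
      (p = 2 ∧ x = fun b : {b : Fin 7 // R.vtx b = p} => if b.val = 5 then 1 else
        if b.val = 4 then r else 0) ∨
      (p = 2 ∧ x = fun b : {b : Fin 7 // R.vtx b = p} => if b.val = 6 then 1 else
        if b.val = 4 then s else 0)}

end QGr


/-! At vertex `0` the cell is zero (no pivot of `β` lies there), so the arrows `g` and `d`
impose nothing. At vertices `1` and `2` a point of the cell is spanned by its Schubert vectors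
`x₇ + u x₄ + v x₅` and `y₂ + r y₁`, `y₃ + s y₁`, which it determines because their
coordinates at the pivots form an identity matrix. The only remaining condition is that
`N_a(x₇ + u x₄ + v x₅) = u y₂ + v y₃` lie in `span(y₂ + r y₁, y₃ + s y₁)`; the only
candidate is `u (y₂ + r y₁) + v (y₃ + s y₁)`, which differs from it by `(r u + s v) y₁`. -/

section PivotFamily

variable {K ι κ : Type} [Field K] [Fintype ι] [DecidableEq ι] {j : ι → κ} {w : ι → κ → K}

theorem eq_sum_apply_smul_of_mem_span (hw : ∀ i, w i ∘ j = Pi.single i 1) {x : κ → K}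
    (hx : x ∈ Submodule.span K (Set.range w)) : x = ∑ i, x (j i) • w i := by
  obtain ⟨c, rfl⟩ := (Submodule.mem_span_range_iff_exists_fun K).1 hx
  refine Finset.sum_congr rfl fun i _ => ?_
  have hcoord : ∀ l, w l (j i) = Pi.single (M := fun _ => K) l 1 i := fun l =>
    congrFun (hw l) i
  simp [Finset.sum_apply, hcoord, Pi.single_apply]

theorem linearIndependent_of_comp_eq_single (hw : ∀ i, w i ∘ j = Pi.single i 1) :
    LinearIndependent K w := by
  apply LinearIndependent.of_comp (LinearMap.funLeft K K j)
  convert (Pi.basisFun K ι).linearIndependent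
  ext i k
  simp [LinearMap.funLeft, ← hw i]

theorem eq_of_span_range_eq {w' : ι → κ → K} (hw : ∀ i, w i ∘ j = Pi.single i 1)
    (hw' : ∀ i, w' i ∘ j = Pi.single i 1)
    (h : Submodule.span K (Set.range w) = Submodule.span K (Set.range w')) : w = w' := by
  funext i
  have hi : w i ∈ Submodule.span K (Set.range w') := h ▸ Submodule.subset_span ⟨i, rfl⟩
  have hcoord : ∀ k, w i (j k) = Pi.single (M := fun _ => K) i 1 k := fun k =>
    congrFun (hw i) k
  rw [eq_sum_apply_smul_of_mem_span hw' hi]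
  simp [hcoord, Pi.single_apply]

end PivotFamily

namespace QGr.Rep

variable {K : Type} [Field K] {V0 A B : Type}

section SchubertBasis

variable [LinearOrder B]

def IsSchubertBasis (R : Rep K V0 A B) (β : Finset B) (p : V0)
    (v : {b : B // b ∈ β ∧ R.vtx b = p} → ({b : B // R.vtx b = p} → K)) : Prop :=
  (∀ b0, v b0 ⟨b0.val, b0.prop.2⟩ = 1) ∧
  (∀ b0 b1, b1.val ≠ b0.val → ¬(b1.val < b0.val ∧ b1.val ∉ β) → v b0 b1 = 0)

theorem inCell_iff_s19 {R : Rep K V0 A B} {β : Finset B} {W : R.SubRep} :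
    R.InCell β W ↔
      ∀ p, ∃ v, R.IsSchubertBasis β p v ∧ W p = Submodule.span K (Set.range v) := by
  simp only [InCell, IsSchubertBasis, and_assoc]

variable {R : Rep K V0 A B} {β : Finset B} {p : V0}
  {v : {b : B // b ∈ β ∧ R.vtx b = p} → ({b : B // R.vtx b = p} → K)}

theorem IsSchubertBasis.comp_pivot (hv : R.IsSchubertBasis β p v) (b0) :
    v b0 ∘ (fun b1 => ⟨b1.val, b1.prop.2⟩) = Pi.single b0 1 := by
  funext b1
  by_cases h : b1 = b0
  · subst h
    simpa using hv.1 b1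
  · rw [Function.comp_apply, Pi.single_eq_of_ne h]
    exact hv.2 b0 _ (fun he => h (Subtype.ext he)) fun hlt => hlt.2 b1.prop.1

variable [Fintype B]

theorem IsSchubertBasis.finrank_span (hv : R.IsSchubertBasis β p v) :
    Module.finrank K (Submodule.span K (Set.range v)) =
      (β.filter fun b => R.vtx b = p).card := by
  rw [finrank_span_eq_card (linearIndependent_of_comp_eq_single hv.comp_pivot),
    Fintype.card_subtype]
  congr 1
  ext
  simp

theorem IsSchubertBasis.eq_of_span_eq
    {v' : {b : B // b ∈ β ∧ R.vtx b = p} → ({b : B // R.vtx b = p} → K)}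
    (hv : R.IsSchubertBasis β p v) (hv' : R.IsSchubertBasis β p v')
    (h : Submodule.span K (Set.range v) = Submodule.span K (Set.range v')) : v = v' :=
  eq_of_span_range_eq hv.comp_pivot hv'.comp_pivot h

theorem mem_cell_iff {W : R.SubRep} : W ∈ R.Cell β ↔ R.IsSubrep W ∧ R.InCell β W := by
  refine ⟨fun h => ⟨h.1, h.2.2⟩, fun h => ⟨h.1, fun p => ?_, h.2⟩⟩
  obtain ⟨v, hv, hW⟩ := inCell_iff_s19.1 h.2 p
  rw [hW, hv.finrank_span]

end SchubertBasis

theorem mmap_mem_of_eq_span {R : Rep K V0 A B} (hlin : R.Linear) {W : R.SubRep} {a : A}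
    {S : Set ({b : B // R.vtx b = R.src a} → K)} (h : W (R.src a) = Submodule.span K S)
    (hS : ∀ w ∈ S, R.mmap a w ∈ W (R.tgt a)) :
    ∀ x ∈ W (R.src a), R.mmap a x ∈ W (R.tgt a) := by
  rw [h]
  exact Submodule.span_le (p := (W (R.tgt a)).comap (IsLinearMap.mk' _ (hlin a))) |>.2 hS

/-- `MapsBasisTo` was elaborated with the classical `DecidableEq` instance on the subtypes;
this restates it for the instance induced by `[DecidableEq B]`. -/
theorem MapsBasisTo.mmap_single [DecidableEq B] {R : Rep K V0 A B} {a : A} {b0 b1 : B}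
    (h : R.MapsBasisTo a b0 b1) (h0 : R.vtx b0 = R.src a) (h1 : R.vtx b1 = R.tgt a) :
    R.mmap a (Pi.single ⟨b0, h0⟩ 1) = Pi.single ⟨b1, h1⟩ 1 := by
  obtain ⟨_, _, e⟩ := h
  convert e

end QGr.Rep

namespace QGr

variable {K : Type} [Field K]

section Vectors

variable (R : Rep K (Fin 3) (Fin 3) (Fin 7)) (r s u v : K)

def vecX7 : {b : Fin 7 // R.vtx b = 1} → K := fun b =>
  if b.val = 3 then 1 else if b.val = 1 then u else if b.val = 2 then v else 0

def vecY2 : {b : Fin 7 // R.vtx b = 2} → K := fun b =>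
  if b.val = 5 then 1 else if b.val = 4 then r else 0

def vecY3 : {b : Fin 7 // R.vtx b = 2} → K := fun b =>
  if b.val = 6 then 1 else if b.val = 4 then s else 0

theorem coneSubrep_zero : coneSubrep R r s u v 0 = ⊥ := by
  simp [coneSubrep]

theorem coneSubrep_one : coneSubrep R r s u v 1 = Submodule.span K {vecX7 R u v} := by
  simp only [coneSubrep, Fin.isValue, true_and, Fin.reduceEq, false_and, or_self, or_false,
    Set.ofPred_eq_eq_singleton]
  rfl

theorem coneSubrep_two :
    coneSubrep R r s u v 2 = Submodule.span K {vecY2 R r, vecY3 R s} := by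
  simp only [coneSubrep, Fin.isValue, Fin.reduceEq, false_and, true_and, false_or]
  rfl

end Vectors

abbrev coneVtx : Fin 7 → Fin 3 := ![0, 1, 1, 1, 2, 2, 2]

/-- The representations in the theorem, with the vertex data written literally: then the
coordinate spaces at `src a` and `tgt a` are definitionally those at the vertices `0, 1, 2`. -/
abbrev coneRep (m : ∀ a : Fin 3, ({b : Fin 7 // coneVtx b = ![0, 0, 1] a} → K) →
      ({b : Fin 7 // coneVtx b = ![1, 1, 2] a} → K)) :
    Rep K (Fin 3) (Fin 3) (Fin 7) :=
  ⟨![0, 0, 1], ![1, 1, 2], coneVtx, m⟩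

def x₄ : {b : Fin 7 // coneVtx b = 1} := ⟨1, by decide⟩
def x₅ : {b : Fin 7 // coneVtx b = 1} := ⟨2, by decide⟩
def x₇ : {b : Fin 7 // coneVtx b = 1} := ⟨3, by decide⟩
def y₁ : {b : Fin 7 // coneVtx b = 2} := ⟨4, by decide⟩
def y₂ : {b : Fin 7 // coneVtx b = 2} := ⟨5, by decide⟩
def y₃ : {b : Fin 7 // coneVtx b = 2} := ⟨6, by decide⟩

theorem coneVtx_eq_one {b : Fin 7} : coneVtx b = 1 → b = 1 ∨ b = 2 ∨ b = 3 := by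
  revert b; decide

theorem coneVtx_eq_two {b : Fin 7} : coneVtx b = 2 → b = 4 ∨ b = 5 ∨ b = 6 := by
  revert b; decide

section Cone

local notation "β" => ({3, 5, 6} : Finset (Fin 7))

theorem pivot_eq_of_coneVtx_eq_one {b : Fin 7} : b ∈ β → coneVtx b = 1 → b = 3 := by
  revert b; decide

theorem pivot_eq_of_coneVtx_eq_two {b : Fin 7} : b ∈ β → coneVtx b = 2 → b = 5 ∨ b = 6 := by
  revert b; decide

theorem coneVtx_pivot_ne_zero {b : Fin 7} : b ∈ β → coneVtx b ≠ 0 := by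
  revert b; decide

variable {m : ∀ a : Fin 3, ({b : Fin 7 // coneVtx b = ![0, 0, 1] a} → K) →
      ({b : Fin 7 // coneVtx b = ![1, 1, 2] a} → K)} (r s u v : K)

local notation "N" => coneRep m

theorem vecX7_eq : vecX7 N u v = Pi.single x₇ 1 + u • Pi.single x₄ 1 + v • Pi.single x₅ 1 := by
  funext ⟨b, hb⟩
  rcases coneVtx_eq_one hb with rfl | rfl | rfl <;>
    simp [vecX7, x₄, x₅, x₇, Subtype.ext_iff]

theorem mmap_two_vecX7 (hlin : (N).Linear) (ha4 : (N).MapsBasisTo 2 1 5)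
    (ha5 : (N).MapsBasisTo 2 2 6)
    (ha7 : ∀ h : (N).vtx 3 = (N).src 2, (N).mmap 2 (Pi.single ⟨3, h⟩ 1) = 0) :
    (N).mmap 2 (vecX7 N u v) = u • Pi.single y₂ 1 + v • Pi.single y₃ 1 := by
  let f : ({b : Fin 7 // coneVtx b = 1} → K) →ₗ[K] ({b : Fin 7 // coneVtx b = 2} → K) :=
    IsLinearMap.mk' ((N).mmap 2) (hlin 2)
  have h7 : f (Pi.single x₇ 1) = 0 := ha7 _
  have h4 : f (Pi.single x₄ 1) = Pi.single y₂ 1 := ha4.mmap_single _ _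
  have h5 : f (Pi.single x₅ 1) = Pi.single y₃ 1 := ha5.mmap_single _ _
  change f _ = _
  rw [vecX7_eq, map_add, map_add, map_smul, map_smul, h7, h4, h5, zero_add]
  rfl

theorem smul_add_smul_mem_span_vecY_iff :
    u • Pi.single y₂ 1 + v • Pi.single y₃ 1 ∈ Submodule.span K {vecY2 N r, vecY3 N s} ↔
      r * u + s * v = 0 := by
  rw [Submodule.mem_span_pair]
  constructor
  · rintro ⟨a, b, hab⟩
    have ha : a = u := by simpa [vecY2, vecY3, y₂, y₃] using congrFun hab y₂
    have hb : b = v := by simpa [vecY2, vecY3, y₂, y₃] using congrFun hab y₃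
    have hy₁ : a * r + b * s = 0 := by simpa [vecY2, vecY3, y₁, y₂, y₃] using congrFun hab y₁
    rw [← ha, ← hb]
    linear_combination hy₁
  · intro h
    refine ⟨u, v, funext fun ⟨b, hb⟩ => ?_⟩
    rcases coneVtx_eq_two hb with rfl | rfl | rfl
    · have hy₁ : u * r + v * s = 0 := by linear_combination h
      simpa [vecY2, vecY3, y₂, y₃, Subtype.ext_iff] using hy₁
    all_goals simp [vecY2, vecY3, y₂, y₃, Subtype.ext_iff]

theorem isSubrep_coneSubrep_iff (hlin : (N).Linear) (ha4 : (N).MapsBasisTo 2 1 5)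
    (ha5 : (N).MapsBasisTo 2 2 6)
    (ha7 : ∀ h : (N).vtx 3 = (N).src 2, (N).mmap 2 (Pi.single ⟨3, h⟩ 1) = 0) :
    (N).IsSubrep (coneSubrep N r s u v) ↔ r * u + s * v = 0 := by
  have hX7 : vecX7 N u v ∈ coneSubrep N r s u v 1 :=
    (coneSubrep_one N r s u v).symm ▸ Submodule.mem_span_singleton_self _
  have harrow : (N).mmap 2 (vecX7 N u v) ∈ coneSubrep N r s u v 2 ↔ r * u + s * v = 0 := by
    rw [mmap_two_vecX7 u v hlin ha4 ha5 ha7, coneSubrep_two]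
    exact smul_add_smul_mem_span_vecY_iff r s u v
  have hzero : coneSubrep N r s u v 0 = Submodule.span K ∅ := by
    rw [Submodule.span_empty, coneSubrep_zero]
  refine ⟨fun h => harrow.1 (h 2 _ hX7), fun h a => ?_⟩
  obtain rfl | rfl | rfl : a = 0 ∨ a = 1 ∨ a = 2 := by omega
  · exact Rep.mmap_mem_of_eq_span hlin hzero fun _ h => h.elim
  · exact Rep.mmap_mem_of_eq_span hlin hzero fun _ h => h.elim
  · exact Rep.mmap_mem_of_eq_span hlin (coneSubrep_one N r s u v) fun _ hw =>
      hw ▸ harrow.2 h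

def coneFamily₁ :
    {b : Fin 7 // b ∈ β ∧ (N).vtx b = 1} → {b : Fin 7 // (N).vtx b = 1} → K :=
  fun _ => vecX7 N u v

def coneFamily₂ :
    {b : Fin 7 // b ∈ β ∧ (N).vtx b = 2} → {b : Fin 7 // (N).vtx b = 2} → K :=
  fun b0 => if b0.val = 5 then vecY2 N r else vecY3 N s

theorem isSchubertBasis_coneFamily₁ : (N).IsSchubertBasis β 1 (coneFamily₁ u v) := by
  refine ⟨fun ⟨b0, hβ, h1⟩ => ?_, fun ⟨b0, hβ, h1⟩ ⟨b1, hb1⟩ hne hfree => ?_⟩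
  · obtain rfl := pivot_eq_of_coneVtx_eq_one hβ h1
    rfl
  · obtain rfl := pivot_eq_of_coneVtx_eq_one hβ h1
    rcases coneVtx_eq_one hb1 with rfl | rfl | rfl <;> simp_all

theorem isSchubertBasis_coneFamily₂ : (N).IsSchubertBasis β 2 (coneFamily₂ r s) := by
  refine ⟨fun ⟨b0, hβ, h2⟩ => ?_, fun ⟨b0, hβ, h2⟩ ⟨b1, hb1⟩ hne hfree => ?_⟩
  · rcases pivot_eq_of_coneVtx_eq_two hβ h2 with rfl | rfl <;> rfl
  · rcases pivot_eq_of_coneVtx_eq_two hβ h2 with rfl | rfl <;>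
      rcases coneVtx_eq_two hb1 with rfl | rfl | rfl <;>
      simp_all [coneFamily₂, vecY2, vecY3]

theorem range_coneFamily₁ : Set.range (coneFamily₁ (m := m) u v) = {vecX7 N u v} :=
  have : Nonempty {b : Fin 7 // b ∈ β ∧ (N).vtx b = 1} := ⟨⟨3, by decide, rfl⟩⟩
  Set.range_const

theorem range_coneFamily₂ :
    Set.range (coneFamily₂ (m := m) r s) = {vecY2 N r, vecY3 N s} := by
  ext x
  constructor
  · rintro ⟨⟨b0, hβ, h2⟩, rfl⟩
    rcases pivot_eq_of_coneVtx_eq_two hβ h2 with rfl | rfl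
    · exact Or.inl rfl
    · exact Or.inr rfl
  · rintro (rfl | rfl)
    · exact ⟨⟨5, by decide, rfl⟩, rfl⟩
    · exact ⟨⟨6, by decide, rfl⟩, rfl⟩

theorem Rep.IsSchubertBasis.eq_coneFamily₁
    {w : {b : Fin 7 // b ∈ β ∧ (N).vtx b = 1} → {b : Fin 7 // (N).vtx b = 1} → K}
    (hw : (N).IsSchubertBasis β 1 w) : ∃ u v, w = coneFamily₁ u v := by
  refine ⟨w ⟨3, by decide, rfl⟩ ⟨1, rfl⟩, w ⟨3, by decide, rfl⟩ ⟨2, rfl⟩,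
    funext fun ⟨b0, hβ, h1⟩ => funext fun ⟨b, hb⟩ => ?_⟩
  obtain rfl := pivot_eq_of_coneVtx_eq_one hβ h1
  rcases coneVtx_eq_one hb with rfl | rfl | rfl
  · rfl
  · rfl
  · exact hw.1 _

theorem Rep.IsSchubertBasis.eq_coneFamily₂
    {w : {b : Fin 7 // b ∈ β ∧ (N).vtx b = 2} → {b : Fin 7 // (N).vtx b = 2} → K}
    (hw : (N).IsSchubertBasis β 2 w) : ∃ r s, w = coneFamily₂ r s := by
  refine ⟨w ⟨5, by decide, rfl⟩ ⟨4, rfl⟩, w ⟨6, by decide, rfl⟩ ⟨4, rfl⟩,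
    funext fun ⟨b0, hβ, h2⟩ => funext fun ⟨b, hb⟩ => ?_⟩
  rcases pivot_eq_of_coneVtx_eq_two hβ h2 with rfl | rfl <;>
    rcases coneVtx_eq_two hb with rfl | rfl | rfl <;>
    first | rfl | exact hw.1 _ | exact hw.2 _ _ (by simp) (by simp)

instance : IsEmpty {b : Fin 7 // b ∈ β ∧ (N).vtx b = 0} :=
  ⟨fun b => coneVtx_pivot_ne_zero b.prop.1 b.prop.2⟩

theorem inCell_coneSubrep : (N).InCell β (coneSubrep N r s u v) := by
  refine Rep.inCell_iff_s19.2 fun p => ?_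
  obtain rfl | rfl | rfl : p = 0 ∨ p = 1 ∨ p = 2 := by omega
  · refine ⟨isEmptyElim, ⟨isEmptyElim, fun b0 => isEmptyElim b0⟩, ?_⟩
    rw [Set.range_eq_empty, Submodule.span_empty, coneSubrep_zero]
  · exact ⟨_, isSchubertBasis_coneFamily₁ u v, by rw [range_coneFamily₁, coneSubrep_one]⟩
  · exact ⟨_, isSchubertBasis_coneFamily₂ r s, by rw [range_coneFamily₂, coneSubrep_two]⟩

theorem Rep.InCell.exists_eq_coneSubrep {W : (N).SubRep} (hW : (N).InCell β W) :
    ∃ r s u v, W = coneSubrep N r s u v := by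
  obtain ⟨w₀, -, hW₀⟩ := Rep.inCell_iff_s19.1 hW 0
  obtain ⟨w₁, hw₁, hW₁⟩ := Rep.inCell_iff_s19.1 hW 1
  obtain ⟨w₂, hw₂, hW₂⟩ := Rep.inCell_iff_s19.1 hW 2
  obtain ⟨u, v, rfl⟩ := Rep.IsSchubertBasis.eq_coneFamily₁ hw₁
  obtain ⟨r, s, rfl⟩ := Rep.IsSchubertBasis.eq_coneFamily₂ hw₂
  refine ⟨r, s, u, v, funext fun p => ?_⟩
  obtain rfl | rfl | rfl : p = 0 ∨ p = 1 ∨ p = 2 := by omega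
  · rw [hW₀, Set.range_eq_empty, Submodule.span_empty, coneSubrep_zero]
  · rw [hW₁, range_coneFamily₁, coneSubrep_one]
  · rw [hW₂, range_coneFamily₂, coneSubrep_two]

theorem coneSubrep_injective {r' s' u' v' : K}
    (h : coneSubrep N r s u v = coneSubrep N r' s' u' v') :
    r = r' ∧ s = s' ∧ u = u' ∧ v = v' := by
  have h₁ := congrFun h 1
  have h₂ := congrFun h 2
  rw [coneSubrep_one, coneSubrep_one, ← range_coneFamily₁, ← range_coneFamily₁] at h₁
  rw [coneSubrep_two, coneSubrep_two, ← range_coneFamily₂, ← range_coneFamily₂] at h₂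
  have e₁ := (isSchubertBasis_coneFamily₁ u v).eq_of_span_eq
    (isSchubertBasis_coneFamily₁ u' v') h₁
  have e₂ := (isSchubertBasis_coneFamily₂ r s).eq_of_span_eq
    (isSchubertBasis_coneFamily₂ r' s') h₂
  exact ⟨congrFun (congrFun e₂ ⟨5, by decide, rfl⟩) ⟨4, rfl⟩,
    congrFun (congrFun e₂ ⟨6, by decide, rfl⟩) ⟨4, rfl⟩,
    congrFun (congrFun e₁ ⟨3, by decide, rfl⟩) ⟨1, rfl⟩,
    congrFun (congrFun e₁ ⟨3, by decide, rfl⟩) ⟨2, rfl⟩⟩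

theorem coneSubrep_mem_cell_iff (hlin : (N).Linear) (ha4 : (N).MapsBasisTo 2 1 5)
    (ha5 : (N).MapsBasisTo 2 2 6)
    (ha7 : ∀ h : (N).vtx 3 = (N).src 2, (N).mmap 2 (Pi.single ⟨3, h⟩ 1) = 0) :
    coneSubrep N r s u v ∈ (N).Cell β ↔ r * u + s * v = 0 := by
  rw [Rep.mem_cell_iff, isSubrep_coneSubrep_iff r s u v hlin ha4 ha5 ha7]
  exact and_iff_left (inCell_coneSubrep r s u v)

end Cone

end QGr

open QGr in
theorem schubert_cell_affine_cone_general
    {K : Type} [Field K]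
    (R : Rep K (Fin 3) (Fin 3) (Fin 7))
    (hsrc : R.src = ![0, 0, 1]) (htgt : R.tgt = ![1, 1, 2])
    (hvtx : R.vtx = ![0, 1, 1, 1, 2, 2, 2])
    (hlin : R.Linear)
    (ha4 : R.MapsBasisTo 2 1 5)
    (ha5 : R.MapsBasisTo 2 2 6)
    (ha7 : ∀ h : R.vtx 3 = R.src 2, R.mmap 2 (Pi.single ⟨3, h⟩ 1) = 0) :
    (∀ z : {z : K × K × K × K // z.1 * z.2.2.1 + z.2.1 * z.2.2.2 = 0},
      coneSubrep R z.val.1 z.val.2.1 z.val.2.2.1 z.val.2.2.2 ∈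
        R.Cell ({3, 5, 6} : Finset (Fin 7))) ∧
    (Function.Injective
      (fun z : {z : K × K × K × K // z.1 * z.2.2.1 + z.2.1 * z.2.2.2 = 0} =>
        coneSubrep R z.val.1 z.val.2.1 z.val.2.2.1 z.val.2.2.2)) ∧
    (∀ W ∈ R.Cell ({3, 5, 6} : Finset (Fin 7)),
      ∃ z : {z : K × K × K × K // z.1 * z.2.2.1 + z.2.1 * z.2.2.2 = 0},
        coneSubrep R z.val.1 z.val.2.1 z.val.2.2.1 z.val.2.2.2 = W) := by
  obtain ⟨src, tgt, vtx, m⟩ := R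
  obtain rfl : src = _ := hsrc
  obtain rfl : tgt = _ := htgt
  obtain rfl : vtx = _ := hvtx
  have hcell := fun r s u v => coneSubrep_mem_cell_iff (m := m) r s u v hlin ha4 ha5 ha7
  refine ⟨fun z => (hcell _ _ _ _).2 z.2, fun z z' h => ?_, fun W hW => ?_⟩
  · obtain ⟨hr, hs, hu, hv⟩ := coneSubrep_injective _ _ _ _ h
    exact Subtype.ext (Prod.ext hr (Prod.ext hs (Prod.ext hu hv)))
  · obtain ⟨r, s, u, v, rfl⟩ := Rep.InCell.exists_eq_coneSubrep hW.2.2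
    exact ⟨⟨(r, s, u, v), (hcell r s u v).1 hW⟩, rfl⟩

open QGr in
/-- For the quiver with vertices `0, 1, 2`, arrows `g = 0, d = 1 : 0 → 1`
and `a = 2 : 1 → 2`, and the representation `N` with `N₀ = K` (basis `c`), `N₁ = K³` (basis
`x₄ < x₅ < x₇`), `N₂ = K³` (basis `y₁ < y₂ < y₃`), `N_g(c) = x₅`, `N_d(c) = x₇`,
`N_a(x₄) = y₂`, `N_a(x₅) = y₃`, `N_a(x₇) = 0`, the Schubert cell `C_β^N` for
`β = {y₂, y₃, x₇}` is in bijection with the affine cone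
`{(r,s,u,v) ∈ K⁴ : r·u + s·v = 0}` via `(r,s,u,v) ↦ (0, span(x₇ + u·x₄ + v·x₅),
span(y₂ + r·y₁, y₃ + s·y₁))`. -/
theorem schubert_cell_affine_cone
    {K : Type} [Field K]
    (R : Rep K (Fin 3) (Fin 3) (Fin 7))
    (hsrc : R.src = ![0, 0, 1]) (htgt : R.tgt = ![1, 1, 2])
    (hvtx : R.vtx = ![0, 1, 1, 1, 2, 2, 2])
    (hlin : R.Linear)
    (hg : R.MapsBasisTo 0 0 2)
    (hd : R.MapsBasisTo 1 0 3)
    (ha4 : R.MapsBasisTo 2 1 5)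
    (ha5 : R.MapsBasisTo 2 2 6)
    (ha7 : ∀ h : R.vtx 3 = R.src 2, R.mmap 2 (Pi.single ⟨3, h⟩ 1) = 0) :
    (∀ z : {z : K × K × K × K // z.1 * z.2.2.1 + z.2.1 * z.2.2.2 = 0},
      coneSubrep R z.val.1 z.val.2.1 z.val.2.2.1 z.val.2.2.2 ∈
        R.Cell ({3, 5, 6} : Finset (Fin 7))) ∧
    (Function.Injective
      (fun z : {z : K × K × K × K // z.1 * z.2.2.1 + z.2.1 * z.2.2.2 = 0} =>
        coneSubrep R z.val.1 z.val.2.1 z.val.2.2.1 z.val.2.2.2)) ∧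
    (∀ W ∈ R.Cell ({3, 5, 6} : Finset (Fin 7)),
      ∃ z : {z : K × K × K × K // z.1 * z.2.2.1 + z.2.1 * z.2.2.2 = 0},
        coneSubrep R z.val.1 z.val.2.1 z.val.2.2.1 z.val.2.2.2 = W) :=
  schubert_cell_affine_cone_general R hsrc htgt hvtx hlin ha4 ha5 ha7
end
end
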